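/- arXiv:math/0406093 — 9 statements merged into one kernel-verified Lean document; each statement's English description precedes it below -/
import Mathlib

section
/- If n ≥ 2 and f : ℂⁿ → ℂⁿ preserves all positive distances (i.e., preserves distance d for every real d > 0), then there exist an affine map I : ℂⁿ → ℂⁿ with orthogonal linear part and ρ ∈ {id_ℂ, τ} such that f = I ∘ (ρ,...,ρ), where (ρ,...,ρ) acts coordinatewise. -/
noncomputable def phi (n : ℕ) (X Y : Fin n → ℂ) : ℂ := ∑ i, (X i - Y i) ^ 2

namespace BQ
open Matrix Finset

variable {n : ℕ}

def emb (a : Fin n → ℝ) : Fin n → ℂ := fun i => (a i : ℂ)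

def cv (a b : Fin n → ℝ) : Fin n → ℂ := fun i => (a i : ℂ) + (b i : ℂ) * Complex.I

lemma emb_zero : emb (0 : Fin n → ℝ) = 0 := by funext i; simp [emb]

lemma emb_sub (a b : Fin n → ℝ) : emb (a - b) = emb a - emb b := by
  funext i; simp [emb]

lemma emb_smul (t : ℝ) (a : Fin n → ℝ) : emb (t • a) = (t : ℂ) • emb a := by
  funext i; simp [emb]

lemma emb_dot (a b : Fin n → ℝ) : emb a ⬝ᵥ emb b = ((a ⬝ᵥ b : ℝ) : ℂ) := by
  simp [emb, dotProduct]

lemma phi_eq (X Y : Fin n → ℂ) : phi n X Y = (X - Y) ⬝ᵥ (X - Y) := by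
  unfold phi dotProduct
  exact Finset.sum_congr rfl fun i _ => by simp [Pi.sub_apply]; ring

lemma dot_pos {a : Fin n → ℝ} (ha : a ≠ 0) : 0 < a ⬝ᵥ a := by
  have h1 : ∃ i, a i ≠ 0 := by by_contra h; push_neg at h; exact ha (funext h)
  obtain ⟨i, hi⟩ := h1
  exact Finset.sum_pos' (fun j _ => mul_self_nonneg _) ⟨i, Finset.mem_univ i, mul_self_pos.mpr hi⟩

lemma dot_nonneg (a : Fin n → ℝ) : 0 ≤ a ⬝ᵥ a :=
  Finset.sum_nonneg fun i _ => mul_self_nonneg _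

lemma dot_sub_self {R : Type*} [CommRing R] (u v : Fin n → R) :
    (u - v) ⬝ᵥ (u - v) = u ⬝ᵥ u - 2 * (u ⬝ᵥ v) + v ⬝ᵥ v := by
  simp only [dotProduct, Pi.sub_apply, Finset.mul_sum, ← Finset.sum_add_distrib,
    ← Finset.sum_sub_distrib]
  exact Finset.sum_congr rfl fun i _ => by ring

lemma dot_diff_diff (u w z : Fin n → ℂ) :
    (u - z) ⬝ᵥ (u - z) - (w - z) ⬝ᵥ (w - z)
      = u ⬝ᵥ u - w ⬝ᵥ w - 2 * ((u - w) ⬝ᵥ z) := by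
  simp only [dotProduct, Pi.sub_apply, Finset.mul_sum, ← Finset.sum_add_distrib,
    ← Finset.sum_sub_distrib]
  exact Finset.sum_congr rfl fun i _ => by ring

lemma dot_mix2 (c d : ℂ) (u w : Fin n → ℂ) :
    (c • u - d • w) ⬝ᵥ (c • u - d • w)
      = c ^ 2 * (u ⬝ᵥ u) - 2 * (c * d) * (u ⬝ᵥ w) + d ^ 2 * (w ⬝ᵥ w) := by
  simp only [dotProduct, Pi.sub_apply, Pi.smul_apply, smul_eq_mul, Finset.mul_sum,
    ← Finset.sum_add_distrib, ← Finset.sum_sub_distrib]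
  exact Finset.sum_congr rfl fun i _ => by ring

lemma dot_single (z : Fin n → ℂ) (j : Fin n) :
    z ⬝ᵥ (fun k => ((Pi.single j 1 : Fin n → ℝ) k : ℂ)) = z j := by
  simp [dotProduct, Pi.single_apply, apply_ite (Complex.ofReal), mul_ite]

lemma dot_emb_single (z : Fin n → ℂ) (j : Fin n) : z ⬝ᵥ emb (Pi.single j 1) = z j :=
  dot_single z j

def Pres (f : (Fin n → ℂ) → (Fin n → ℂ)) : Prop :=
  ∀ X Y : Fin n → ℂ, ∀ r : ℝ, 0 < r → (X - Y) ⬝ᵥ (X - Y) = (r : ℂ) →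
    (f X - f Y) ⬝ᵥ (f X - f Y) = (r : ℂ)

variable (f : (Fin n → ℂ) → (Fin n → ℂ))

def g (w : Fin n → ℝ) : Fin n → ℂ := f (emb w) - f 0

lemma g_zero : g f 0 = 0 := by simp [g, emb_zero]

lemma g_sub_dot (hf : Pres f) (u w : Fin n → ℝ) (huw : u ≠ w) :
    (g f u - g f w) ⬝ᵥ (g f u - g f w) = (((u - w) ⬝ᵥ (u - w) : ℝ) : ℂ) := by
  have h0 : g f u - g f w = f (emb u) - f (emb w) := by simp [g]
  rw [h0]
  apply hf (emb u) (emb w) _ (dot_pos (sub_ne_zero.mpr huw))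
  rw [← emb_sub, emb_dot]

lemma g_dot_self (hf : Pres f) (u : Fin n → ℝ) : g f u ⬝ᵥ g f u = ((u ⬝ᵥ u : ℝ) : ℂ) := by
  by_cases hu : u = 0
  · subst hu; simp [g_zero]
  · have := g_sub_dot f hf u 0 hu
    simpa [g_zero] using this

lemma g_dot (hf : Pres f) (u w : Fin n → ℝ) : g f u ⬝ᵥ g f w = ((u ⬝ᵥ w : ℝ) : ℂ) := by
  by_cases huw : u = w
  · subst huw; exact g_dot_self f hf u
  · have key := g_sub_dot f hf u w huw
    rw [dot_sub_self, dot_sub_self] at key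
    push_cast at key
    have hu := g_dot_self f hf u
    have hw := g_dot_self f hf w
    push_cast at hu hw ⊢
    linear_combination (hu + hw - key) / 2

def M : Matrix (Fin n) (Fin n) ℂ := Matrix.of fun j i => g f (Pi.single i 1) j

lemma single_dot (i j : Fin n) :
    (Pi.single i 1 : Fin n → ℝ) ⬝ᵥ Pi.single j 1 = if i = j then 1 else 0 := by
  rcases eq_or_ne i j with h | h
  · subst h; simp [dotProduct, Pi.single_apply]
  · simp only [dotProduct, Pi.single_apply]
    rw [if_neg h]
    apply Finset.sum_eq_zero
    intro k _
    split_ifs with h1 h2 <;> simp_all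

lemma single_dot_left (j : Fin n) (b : Fin n → ℝ) :
    (Pi.single j 1 : Fin n → ℝ) ⬝ᵥ b = b j := by
  simp [dotProduct, Pi.single_apply, ite_mul]

lemma col_dot (hf : Pres f) (z : Fin n → ℝ) (i : Fin n) :
    g f z ⬝ᵥ (fun k => M f k i) = ((z ⬝ᵥ Pi.single i 1 : ℝ) : ℂ) := by
  have : (fun k => M f k i) = g f (Pi.single i 1) := rfl
  rw [this, g_dot f hf]

lemma MtM (hf : Pres f) : (M f)ᵀ * (M f) = 1 := by
  ext i j
  rw [Matrix.mul_apply, Matrix.one_apply]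
  have : ∑ k, (M f)ᵀ i k * M f k j = g f (Pi.single i 1) ⬝ᵥ g f (Pi.single j 1) := by
    simp [Matrix.transpose_apply, dotProduct, M]
  rw [this, g_dot f hf, single_dot]
  split <;> norm_num

lemma ortho_dot {A : Matrix (Fin n) (Fin n) ℂ} (hA : Aᵀ * A = 1) (x y : Fin n → ℂ) :
    (A *ᵥ x) ⬝ᵥ (A *ᵥ y) = x ⬝ᵥ y := by
  rw [dotProduct_mulVec]
  have hx : (A *ᵥ x) ᵥ* A = x := by
    rw [← vecMul_transpose, vecMul_vecMul, hA, vecMul_one]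
  rw [hx]

lemma MMt (hf : Pres f) : (M f) * (M f)ᵀ = 1 := by
  rw [mul_eq_one_comm]; exact MtM f hf

lemma g_lin (hf : Pres f) (w : Fin n → ℝ) : g f w = (M f) *ᵥ (emb w) := by
  set D : Fin n → ℂ := g f w - (M f) *ᵥ (emb w) with hD
  have hcol : ∀ i, (M f) *ᵥ emb (Pi.single i 1) = g f (Pi.single i 1) := by
    intro i
    funext j
    simp only [mulVec, dotProduct, emb, Pi.single_apply, apply_ite (Complex.ofReal),
      mul_ite, Complex.ofReal_one, Complex.ofReal_zero, mul_one, mul_zero]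
    simp [M]
  have hDcol : ∀ i, D ⬝ᵥ (fun k => M f k i) = 0 := by
    intro i
    have h1 : D ⬝ᵥ (fun k => M f k i) = g f w ⬝ᵥ (fun k => M f k i)
        - ((M f) *ᵥ emb w) ⬝ᵥ (fun k => M f k i) := by
      rw [hD, sub_dotProduct]
    have h2 : ((M f) *ᵥ emb w) ⬝ᵥ (fun k => M f k i)
        = ((M f) *ᵥ emb w) ⬝ᵥ ((M f) *ᵥ emb (Pi.single i 1)) := by
      rw [hcol i]; rfl
    rw [h1, h2, ortho_dot (MtM f hf), emb_dot, col_dot f hf]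
    ring
  have hvm : D ᵥ* (M f) = 0 := by
    funext i
    exact hDcol i
  have hD0 : D = 0 := by
    have h2 : D ᵥ* ((M f) * (M f)ᵀ) = 0 := by
      rw [← vecMul_vecMul, hvm, zero_vecMul]
    rwa [MMt f hf, vecMul_one] at h2
  exact sub_eq_zero.mp (hD ▸ hD0)

/- ## cv lemmas -/

lemma emb_eq_cv (a : Fin n → ℝ) : emb a = cv a 0 := by funext i; simp [emb, cv]

lemma cv_sub (a b c d : Fin n → ℝ) : cv a b - cv c d = cv (a - c) (b - d) := by
  funext i; simp [cv]; ring

lemma cv_dot_self (a b : Fin n → ℝ) :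
    cv a b ⬝ᵥ cv a b = ((a ⬝ᵥ a - b ⬝ᵥ b : ℝ) : ℂ) + 2 * ((a ⬝ᵥ b : ℝ) : ℂ) * Complex.I := by
  simp only [cv, dotProduct]
  push_cast
  rw [Finset.mul_sum, Finset.sum_mul, ← Finset.sum_sub_distrib, ← Finset.sum_add_distrib]
  exact Finset.sum_congr rfl fun i _ => by
    linear_combination ((b i : ℂ) * (b i)) * Complex.I_sq

lemma dist_cv (a b c d : Fin n → ℝ) :
    (cv a b - cv c d) ⬝ᵥ (cv a b - cv c d)
      = (((a - c) ⬝ᵥ (a - c) - (b - d) ⬝ᵥ (b - d) : ℝ) : ℂ)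
        + 2 * (((a - c) ⬝ᵥ (b - d) : ℝ) : ℂ) * Complex.I := by
  rw [cv_sub, cv_dot_self]

lemma ri_eq {x y r : ℝ} (h : (x : ℂ) + (y : ℂ) * Complex.I = (r : ℂ)) : x = r ∧ y = 0 := by
  have hre := congrArg Complex.re h
  have him := congrArg Complex.im h
  simp at hre him
  exact ⟨hre, him⟩

lemma exists_perp (hn : 2 ≤ n) (b : Fin n → ℝ) : ∃ p : Fin n → ℝ, p ⬝ᵥ b = 0 ∧ p ≠ 0 := by
  have h0 : (0 : ℕ) < n := by omega
  have h1 : (1 : ℕ) < n := by omega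
  by_cases hb : b = 0
  · refine ⟨Pi.single ⟨0, h0⟩ 1, by simp [hb], ?_⟩
    intro h
    have := congrFun h ⟨0, h0⟩
    simp at this
  · obtain ⟨k, hk⟩ : ∃ k, b k ≠ 0 := by
      by_contra h; push_neg at h; exact hb (funext h)
    obtain ⟨j, hj⟩ : ∃ j : Fin n, j ≠ k := by
      rcases eq_or_ne k ⟨0, h0⟩ with rfl | h
      · exact ⟨⟨1, h1⟩, by simp [Fin.ext_iff]⟩
      · exact ⟨⟨0, h0⟩, fun hc => h hc.symm⟩
    refine ⟨b k • (Pi.single j 1 : Fin n → ℝ) - b j • (Pi.single k 1 : Fin n → ℝ), ?_, ?_⟩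
    · rw [sub_dotProduct, smul_dotProduct, smul_dotProduct, single_dot_left, single_dot_left]
      simp [mul_comm]
    · intro h
      have := congrFun h j
      simp [Pi.single_apply, hj] at this
      exact hk this

lemma conj_cv (a b : Fin n → ℝ) :
    (fun i => (starRingEnd ℂ) (cv a b i)) = cv a (-b) := by
  funext i
  simp only [cv, Pi.neg_apply, Complex.ofReal_neg, map_add, _root_.map_mul,
    Complex.conj_ofReal, Complex.conj_I]
  ring

lemma cv_ne_conj {a b : Fin n → ℝ} (hb : b ≠ 0) : cv a b ≠ cv a (-b) := by
  obtain ⟨i, hi⟩ : ∃ i, b i ≠ 0 := by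
    by_contra h; push_neg at h; exact hb (funext h)
  intro h
  have h2 := congrArg Complex.im (congrFun h i)
  simp only [cv, Complex.add_im, Complex.ofReal_im, Complex.mul_im, Complex.ofReal_re,
    Complex.I_im, Complex.I_re, Pi.neg_apply, Complex.neg_re, Complex.neg_im,
    Complex.ofReal_neg] at h2
  apply hi
  linarith

lemma cv_decomp (X : Fin n → ℂ) : X = cv (fun i => (X i).re) (fun i => (X i).im) := by
  funext i
  simp [cv]

lemma step2 (hn : 2 ≤ n) (h : (Fin n → ℂ) → (Fin n → ℂ)) (hh : Pres h)
    (hfix : ∀ w : Fin n → ℝ, h (emb w) = emb w) (X : Fin n → ℂ) :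
    h X = X ∨ h X = fun i => (starRingEnd ℂ) (X i) := by
  have hX : X = cv (fun i => (X i).re) (fun i => (X i).im) := cv_decomp X
  set a : Fin n → ℝ := fun i => (X i).re with ha
  set b : Fin n → ℝ := fun i => (X i).im with hb
  by_cases hb0 : b = 0
  · left
    have hXa : X = emb a := by rw [hX, hb0, ← emb_eq_cv]
    rw [hXa, hfix]
  · set W := h X with hWdef
    have key0 : ∀ v : Fin n → ℝ, (a - v) ⬝ᵥ b = 0 → b ⬝ᵥ b < (a - v) ⬝ᵥ (a - v) →
        (W - emb v) ⬝ᵥ (W - emb v) = (((a - v) ⬝ᵥ (a - v) - b ⬝ᵥ b : ℝ) : ℂ) := by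
      intro v h1 h2
      have hr : (X - emb v) ⬝ᵥ (X - emb v) = (((a - v) ⬝ᵥ (a - v) - b ⬝ᵥ b : ℝ) : ℂ) := by
        rw [hX, emb_eq_cv, dist_cv]
        simp [h1]
      have h3 := hh X (emb v) _ (by linarith) hr
      rwa [hfix v] at h3
    have hWv : ∀ v : Fin n → ℝ, (a - v) ⬝ᵥ b = 0 → b ⬝ᵥ b < (a - v) ⬝ᵥ (a - v) →
        (W - X) ⬝ᵥ emb v = (W ⬝ᵥ W - X ⬝ᵥ X) / 2 := by
      intro v h1 h2
      have hrX : (X - emb v) ⬝ᵥ (X - emb v) = (((a - v) ⬝ᵥ (a - v) - b ⬝ᵥ b : ℝ) : ℂ) := by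
        rw [hX, emb_eq_cv, dist_cv]
        simp [h1]
      have e := dot_diff_diff W X (emb v)
      rw [key0 v h1 h2, ← hrX] at e
      linear_combination e / 2
    have key1 : ∀ u : Fin n → ℝ, u ⬝ᵥ b = 0 → (W - X) ⬝ᵥ emb u = 0 := by
      intro u hu
      by_cases hu0 : u = 0
      · subst hu0; rw [emb_zero, dotProduct_zero]
      · have huu : 0 < u ⬝ᵥ u := dot_pos hu0
        have hbb : (0:ℝ) ≤ b ⬝ᵥ b := dot_nonneg b
        set t : ℝ := (b ⬝ᵥ b) / (u ⬝ᵥ u) + 2 with ht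
        have htu : t * (u ⬝ᵥ u) = b ⬝ᵥ b + 2 * (u ⬝ᵥ u) := by
          rw [ht, add_mul, div_mul_cancel₀ _ huu.ne']
        have ht2 : 2 ≤ t := le_add_of_nonneg_left (div_nonneg hbb huu.le)
        have hgen : ∀ s : ℝ, 2 ≤ t → b ⬝ᵥ b < s ^ 2 * (u ⬝ᵥ u) →
            (W - X) ⬝ᵥ emb (a + s • u) = (W ⬝ᵥ W - X ⬝ᵥ X) / 2 := by
          intro s _ hlt
          have hav : a - (a + s • u) = (-s) • u := by module
          apply hWv
          · rw [hav, smul_dotProduct, hu, smul_zero]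
          · rw [hav, smul_dotProduct, dotProduct_smul, smul_eq_mul, smul_eq_mul]
            calc b ⬝ᵥ b < s ^ 2 * (u ⬝ᵥ u) := hlt
              _ = -s * (-s * (u ⬝ᵥ u)) := by ring
        have e1 := hgen t ht2 (by nlinarith [htu, huu, ht2])
        have e2 := hgen (t - 1) ht2 (by nlinarith [htu, huu, ht2, sq_nonneg (t - 2)])
        have hdiff : emb (a + t • u) - emb (a + (t - 1) • u) = emb u := by
          have harg : a + t • u - (a + (t - 1) • u) = u := by module
          rw [← emb_sub, harg]
        have e3 : (W - X) ⬝ᵥ (emb (a + t • u) - emb (a + (t - 1) • u)) = 0 := by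
          rw [dotProduct_sub, e1, e2, sub_self]
        rwa [hdiff] at e3
    have hbbpos : (0:ℝ) < b ⬝ᵥ b := dot_pos hb0
    have hbbC : ((b ⬝ᵥ b : ℝ) : ℂ) ≠ 0 := by
      exact_mod_cast hbbpos.ne'
    have key2 : ∀ j, ((b ⬝ᵥ b : ℝ) : ℂ) * (W - X) j = ((W - X) ⬝ᵥ emb b) * ((b j : ℝ) : ℂ) := by
      intro j
      set u : Fin n → ℝ := (b ⬝ᵥ b) • (Pi.single j 1 : Fin n → ℝ) - (b j) • b with hu
      have hub : u ⬝ᵥ b = 0 := by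
        rw [hu, sub_dotProduct, smul_dotProduct, smul_dotProduct, single_dot_left,
          smul_eq_mul, smul_eq_mul]
        ring
      have h1 := key1 u hub
      have hemb : emb u = ((b ⬝ᵥ b : ℝ) : ℂ) • emb (Pi.single j 1) - ((b j : ℝ) : ℂ) • emb b := by
        rw [hu, emb_sub, emb_smul, emb_smul]
      rw [hemb, dotProduct_sub, dotProduct_smul, dotProduct_smul, dot_emb_single,
        smul_eq_mul, smul_eq_mul] at h1
      simp only [Pi.sub_apply] at h1 ⊢
      linear_combination h1
    set lam : ℂ := ((W - X) ⬝ᵥ emb b) / ((b ⬝ᵥ b : ℝ) : ℂ) with hlam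
    have hW : W = X + lam • emb b := by
      funext j
      have h1 := key2 j
      simp only [Pi.sub_apply] at h1
      have h2 : W j - X j = lam * ((b j : ℝ) : ℂ) := by
        rw [hlam]
        have hd : ((W - X) ⬝ᵥ emb b) = W ⬝ᵥ emb b - X ⬝ᵥ emb b := by
          rw [sub_dotProduct]
        rw [hd] at h1 ⊢
        field_simp
        linear_combination h1
      simp only [Pi.add_apply, Pi.smul_apply, smul_eq_mul, emb]
      linear_combination h2
    clear_value lam
    obtain ⟨p, hpb, hp0⟩ := exists_perp hn b
    have hpp : (0:ℝ) < p ⬝ᵥ p := dot_pos hp0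
    set s : ℝ := (b ⬝ᵥ b) / (p ⬝ᵥ p) + 1 with hs
    have hsp : s * (p ⬝ᵥ p) = b ⬝ᵥ b + p ⬝ᵥ p := by
      rw [hs, add_mul, div_mul_cancel₀ _ hpp.ne', one_mul]
    have hs1 : 1 ≤ s := le_add_of_nonneg_left (div_nonneg hbbpos.le hpp.le)
    have hav : a - (a + s • p) = (-s) • p := by module
    have hcond1 : (a - (a + s • p)) ⬝ᵥ b = 0 := by
      rw [hav, smul_dotProduct, hpb, smul_zero]
    have hcond2 : b ⬝ᵥ b < (a - (a + s • p)) ⬝ᵥ (a - (a + s • p)) := by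
      rw [hav, smul_dotProduct, dotProduct_smul, smul_eq_mul, smul_eq_mul]
      nlinarith [hsp, hpp, hs1]
    have h4 := key0 (a + s • p) hcond1 hcond2
    have hWv2 : W - emb (a + s • p) = (lam + Complex.I) • emb b - (s : ℂ) • emb p := by
      rw [hW, hX]
      funext i
      simp only [Pi.sub_apply, Pi.add_apply, Pi.smul_apply, smul_eq_mul, emb, cv]
      push_cast
      ring
    have h6 := dot_mix2 (lam + Complex.I) ((s : ℝ) : ℂ) (emb b) (emb p)
    rw [← hWv2, h4, emb_dot, emb_dot, emb_dot] at h6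
    have hbp : b ⬝ᵥ p = 0 := by rw [dotProduct_comm]; exact hpb
    rw [hbp] at h6
    have hrw : ((a - (a + s • p)) ⬝ᵥ (a - (a + s • p)) : ℝ) = s * (s * (p ⬝ᵥ p)) := by
      rw [hav, smul_dotProduct, dotProduct_smul, smul_eq_mul, smul_eq_mul]
      ring
    rw [hrw] at h6
    have h8 : (lam + Complex.I) ^ 2 = -1 := by
      have h7 : ((lam + Complex.I) ^ 2 + 1) * ((b ⬝ᵥ b : ℝ) : ℂ) = 0 := by
        push_cast at h6 ⊢
        linear_combination -h6
      rcases mul_eq_zero.mp h7 with h9 | h9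
      · linear_combination h9
      · exact absurd h9 hbbC
    have h9 : lam * (lam + 2 * Complex.I) = 0 := by
      linear_combination h8 - Complex.I_sq
    rcases mul_eq_zero.mp h9 with h10 | h10
    · left
      rw [hW, h10]
      simp
    · right
      have hlam2 : lam = -(2 * Complex.I) := by linear_combination h10
      rw [hW, hlam2, hX, conj_cv]
      funext i
      simp only [Pi.add_apply, Pi.smul_apply, smul_eq_mul, emb, cv, Pi.neg_apply]
      push_cast
      ring

lemma dot_add_self (u v : Fin n → ℝ) :
    (u + v) ⬝ᵥ (u + v) = u ⬝ᵥ u + 2 * (u ⬝ᵥ v) + v ⬝ᵥ v := by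
  simp only [dotProduct, Pi.add_apply, Finset.mul_sum, ← Finset.sum_add_distrib]
  exact Finset.sum_congr rfl fun i _ => by ring

lemma ri_eq2 {x y r : ℝ} (h : (x : ℂ) + 2 * (y : ℂ) * Complex.I = (r : ℂ)) :
    x = r ∧ y = 0 := by
  have hre := congrArg Complex.re h
  have him := congrArg Complex.im h
  simp at hre him
  exact ⟨hre, him⟩

variable (h : (Fin n → ℂ) → (Fin n → ℂ))

lemma sign_link (hh : Pres h)
    (hstep : ∀ X, h X = X ∨ h X = fun i => (starRingEnd ℂ) (X i))
    (a b c d : Fin n → ℝ) (hbd : b ⬝ᵥ d ≠ 0)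
    (h1 : (a - c) ⬝ᵥ (b - d) = 0)
    (h2 : (b - d) ⬝ᵥ (b - d) < (a - c) ⬝ᵥ (a - c)) :
    (h (cv a b) = cv a b ↔ h (cv c d) = cv c d) := by
  have hb0 : b ≠ 0 := by rintro rfl; simp at hbd
  have hd0 : d ≠ 0 := by rintro rfl; simp at hbd
  have hr : (cv a b - cv c d) ⬝ᵥ (cv a b - cv c d)
      = (((a - c) ⬝ᵥ (a - c) - (b - d) ⬝ᵥ (b - d) : ℝ) : ℂ) := by
    rw [dist_cv, h1]
    simp
  have h3 := hh (cv a b) (cv c d) _ (by linarith) hr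
  have hebd : (b + d) ⬝ᵥ (b + d) ≠ (b - d) ⬝ᵥ (b - d) := by
    rw [dot_add_self, dot_sub_self]
    intro hcon
    exact hbd (by linarith)
  rcases hstep (cv a b) with hA | hA <;> rcases hstep (cv c d) with hB | hB
  · simp [hA, hB]
  · exfalso
    rw [conj_cv] at hB
    rw [hA, hB, dist_cv, sub_neg_eq_add] at h3
    obtain ⟨hre, -⟩ := ri_eq2 h3
    exact hebd (by linarith)
  · exfalso
    rw [conj_cv] at hA
    rw [hA, hB, dist_cv] at h3
    have hneg : -b - d = -(b + d) := by module
    rw [hneg] at h3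
    have hng : (-(b + d)) ⬝ᵥ (-(b + d)) = (b + d) ⬝ᵥ (b + d) := by
      rw [neg_dotProduct, dotProduct_neg, neg_neg]
    rw [hng] at h3
    have h3' : (((a - c) ⬝ᵥ (a - c) - (b + d) ⬝ᵥ (b + d) : ℝ) : ℂ)
        + 2 * (((a - c) ⬝ᵥ (-(b + d)) : ℝ) : ℂ) * Complex.I
        = (((a - c) ⬝ᵥ (a - c) - (b - d) ⬝ᵥ (b - d) : ℝ) : ℂ) := h3
    obtain ⟨hre, -⟩ := ri_eq2 h3'
    exact hebd (by linarith)
  · rw [conj_cv] at hA hB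
    constructor
    · intro hx
      exact absurd (hx.symm.trans hA) (cv_ne_conj hb0)
    · intro hx
      exact absurd (hx.symm.trans hB) (cv_ne_conj hd0)

lemma sign_shift (hh : Pres h)
    (hstep : ∀ X, h X = X ∨ h X = fun i => (starRingEnd ℂ) (X i))
    (a a' b : Fin n → ℝ) (hb : b ≠ 0) :
    (h (cv a b) = cv a b ↔ h (cv a' b) = cv a' b) := by
  rcases eq_or_ne a a' with rfl | hne
  · exact Iff.rfl
  · apply sign_link h hh hstep a b a' b (dot_pos hb).ne'
    · simp
    · simpa using dot_pos (sub_ne_zero.mpr hne)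


lemma sign_linkB (hn : 2 ≤ n) (hh : Pres h)
    (hstep : ∀ X, h X = X ∨ h X = fun i => (starRingEnd ℂ) (X i))
    (a b a' b' : Fin n → ℝ) (hbd : b ⬝ᵥ b' ≠ 0) :
    (h (cv a b) = cv a b ↔ h (cv a' b') = cv a' b') := by
  have hb' : b' ≠ 0 := by rintro rfl; simp at hbd
  obtain ⟨p, hp, hp0⟩ := exists_perp hn (b - b')
  have hpp : (0:ℝ) < p ⬝ᵥ p := dot_pos hp0
  set s : ℝ := ((b - b') ⬝ᵥ (b - b')) / (p ⬝ᵥ p) + 1 with hs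
  have hbb' : (0:ℝ) ≤ (b - b') ⬝ᵥ (b - b') := dot_nonneg _
  have hsp : s * (p ⬝ᵥ p) = (b - b') ⬝ᵥ (b - b') + p ⬝ᵥ p := by
    rw [hs, add_mul, div_mul_cancel₀ _ hpp.ne', one_mul]
  have hs1 : 1 ≤ s := le_add_of_nonneg_left (div_nonneg hbb' hpp.le)
  set c : Fin n → ℝ := a + s • p with hc
  have hac : a - c = (-s) • p := by rw [hc]; module
  have e1 : (h (cv a b) = cv a b ↔ h (cv c b') = cv c b') := by
    apply sign_link h hh hstep a b c b' hbd
    · rw [hac, smul_dotProduct, hp, smul_zero]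
    · rw [hac, smul_dotProduct, dotProduct_smul, smul_eq_mul, smul_eq_mul]
      nlinarith [hsp, hpp, hs1]
  exact e1.trans (sign_shift h hh hstep c a' b' hb')

lemma sign_all (hn : 2 ≤ n) (hh : Pres h)
    (hstep : ∀ X, h X = X ∨ h X = fun i => (starRingEnd ℂ) (X i))
    (a b a' b' : Fin n → ℝ) (hb : b ≠ 0) (hb' : b' ≠ 0) :
    (h (cv a b) = cv a b ↔ h (cv a' b') = cv a' b') := by
  by_cases hbd : b ⬝ᵥ b' = 0
  · have h1 : b ⬝ᵥ (b + b') ≠ 0 := by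
      rw [dotProduct_add, hbd, add_zero]
      exact (dot_pos hb).ne'
    have h2 : (b + b') ⬝ᵥ b' ≠ 0 := by
      rw [add_dotProduct, hbd, zero_add]
      exact (dot_pos hb').ne'
    exact (sign_linkB h hn hh hstep a b a (b + b') h1).trans
      (sign_linkB h hn hh hstep a (b + b') a' b' h2)
  · exact sign_linkB h hn hh hstep a b a' b' hbd

lemma step3 (hn : 2 ≤ n) (hh : Pres h)
    (hfix : ∀ w : Fin n → ℝ, h (emb w) = emb w) :
    ∃ ρ : ℂ → ℂ, (ρ = id ∨ ρ = fun z => (starRingEnd ℂ) z) ∧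
      ∀ X : Fin n → ℂ, h X = fun i => ρ (X i) := by
  have hstep := step2 hn h hh hfix
  have h0n : (0:ℕ) < n := by omega
  set b₀ : Fin n → ℝ := Pi.single ⟨0, h0n⟩ 1 with hb₀
  have hb₀0 : b₀ ≠ 0 := by
    intro hcon
    have := congrFun hcon ⟨0, h0n⟩
    simp [hb₀] at this
  by_cases hc : h (cv 0 b₀) = cv 0 b₀
  · refine ⟨id, Or.inl rfl, ?_⟩
    intro X
    have hXid : (fun i => id (X i)) = X := rfl
    rw [hXid]
    have hX : X = cv (fun i => (X i).re) (fun i => (X i).im) := cv_decomp X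
    by_cases hbX : (fun i => (X i).im) = (0 : Fin n → ℝ)
    · rcases hstep X with h1 | h1
      · exact h1
      · rw [h1]
        funext i
        have him : (X i).im = 0 := congrFun hbX i
        simp [Complex.conj_eq_iff_im.mpr him]
    · have := (sign_all h hn hh hstep (fun i => (X i).re) (fun i => (X i).im)
        0 b₀ hbX hb₀0).mpr hc
      rwa [← hX] at this
  · refine ⟨fun z => (starRingEnd ℂ) z, Or.inr rfl, ?_⟩
    intro X
    rcases hstep X with h1 | h1
    · by_cases hbX : (fun i => (X i).im) = (0 : Fin n → ℝ)
      · rw [h1]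
        funext i
        have him : (X i).im = 0 := congrFun hbX i
        simp [Complex.conj_eq_iff_im.mpr him]
      · exfalso
        apply hc
        have hX : X = cv (fun i => (X i).re) (fun i => (X i).im) := cv_decomp X
        refine (sign_all h hn hh hstep (fun i => (X i).re) (fun i => (X i).im)
          0 b₀ hbX hb₀0).mp ?_
        rwa [← hX]
    · exact h1

end BQ

open Matrix in
/-- If n ≥ 2 and f : ℂⁿ → ℂⁿ preserves all positive distances, then
f = I ∘ (ρ,...,ρ) for some affine map I with orthogonal linear part and
ρ ∈ {id, complex conjugation}. -/
theorem stmt_1 (n : ℕ) (hn : 2 ≤ n) (f : (Fin n → ℂ) → (Fin n → ℂ))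
    (hf : ∀ d : ℝ, 0 < d → ∀ X Y : Fin n → ℂ,
      phi n X Y = (d : ℂ) ^ 2 → phi n (f X) (f Y) = (d : ℂ) ^ 2) :
    ∃ (I : (Fin n → ℂ) →ᵃ[ℂ] (Fin n → ℂ)) (ρ : ℂ → ℂ),
      (∀ X Y : Fin n → ℂ, phi n (I X) (I Y) = phi n X Y) ∧
      (ρ = id ∨ ρ = fun z => (starRingEnd ℂ) z) ∧
      (∀ X : Fin n → ℂ, f X = I (fun i => ρ (X i))) := by
  classical
  have hf' : BQ.Pres f := by
    intro X Y r hr hXY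
    have hd : (0:ℝ) < Real.sqrt r := Real.sqrt_pos.mpr hr
    have hsq : ((Real.sqrt r : ℝ) : ℂ) ^ 2 = (r : ℂ) := by
      rw [← Complex.ofReal_pow, Real.sq_sqrt hr.le]
    have h1 := hf (Real.sqrt r) hd X Y (by rw [BQ.phi_eq, hXY, hsq])
    rw [BQ.phi_eq] at h1
    rw [h1, hsq]
  set A := BQ.M f with hA
  have hMtM : Aᵀ * A = 1 := BQ.MtM f hf'
  have hMMt : A * Aᵀ = 1 := BQ.MMt f hf'
  set h : (Fin n → ℂ) → (Fin n → ℂ) := fun X => Aᵀ *ᵥ (f X - f 0) with hh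
  have hhP : BQ.Pres h := by
    intro X Y r hr hXY
    have h1 : h X - h Y = Aᵀ *ᵥ (f X - f Y) := by
      rw [hh]
      dsimp only
      rw [← Matrix.mulVec_sub]
      congr 1
      abel
    rw [h1, BQ.ortho_dot (by rw [Matrix.transpose_transpose]; exact hMMt)]
    exact hf' X Y r hr hXY
  have hfix : ∀ w : Fin n → ℝ, h (BQ.emb w) = BQ.emb w := by
    intro w
    rw [hh]
    dsimp only
    have h1 : f (BQ.emb w) - f 0 = BQ.g f w := rfl
    rw [h1, BQ.g_lin f hf' w, Matrix.mulVec_mulVec, hMtM, Matrix.one_mulVec]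
  obtain ⟨ρ, hρ, hρall⟩ := BQ.step3 h hn hhP hfix
  refine ⟨AffineMap.mk (fun X => f 0 + A *ᵥ X) A.mulVecLin ?_, ρ, ?_, hρ, ?_⟩
  · intro p v
    simp only [Matrix.mulVecLin_apply]
    have hva : v +ᵥ p = v + p := rfl
    have hva2 : ∀ z w : Fin n → ℂ, z +ᵥ w = z + w := fun _ _ => rfl
    rw [hva, hva2, Matrix.mulVec_add]
    abel
  · intro X Y
    rw [BQ.phi_eq, BQ.phi_eq]
    have h1 : (f 0 + A *ᵥ X) - (f 0 + A *ᵥ Y) = A *ᵥ (X - Y) := by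
      rw [Matrix.mulVec_sub]
      abel
    show ((f 0 + A *ᵥ X) - (f 0 + A *ᵥ Y)) ⬝ᵥ ((f 0 + A *ᵥ X) - (f 0 + A *ᵥ Y))
      = (X - Y) ⬝ᵥ (X - Y)
    rw [h1, BQ.ortho_dot hMtM]
  · intro X
    have h2 := congrArg (fun z => A *ᵥ z) (hρall X)
    simp only [hh] at h2
    rw [Matrix.mulVec_mulVec, hMMt, Matrix.one_mulVec] at h2
    show f X = f 0 + A *ᵥ (fun i => ρ (X i))
    rw [← h2]
    abel
end

section
/- If n ≥ 2, f : ℂⁿ → ℂⁿ preserves unit distance, and f(X) = X for every X ∈ ℝⁿ, then either f is the identity map of ℂⁿ or f is coordinatewise complex conjugation, i.e., f = (τ,...,τ). -/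
namespace BQ
variable {n : ℕ}

def dot (a b : Fin n → ℝ) : ℝ := ∑ i, a i * b i

lemma dot_comm (a b : Fin n → ℝ) : dot a b = dot b a :=
  Finset.sum_congr rfl fun i _ => mul_comm _ _

lemma dot_add_left (a b c : Fin n → ℝ) : dot (a + b) c = dot a c + dot b c := by
  unfold dot; rw [← Finset.sum_add_distrib]
  exact Finset.sum_congr rfl fun i _ => by simp [add_mul]

lemma dot_sub_left (a b c : Fin n → ℝ) : dot (a - b) c = dot a c - dot b c := by
  unfold dot; rw [← Finset.sum_sub_distrib]
  exact Finset.sum_congr rfl fun i _ => by simp [sub_mul]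

lemma dot_smul_left (r : ℝ) (a b : Fin n → ℝ) : dot (r • a) b = r * dot a b := by
  unfold dot; rw [Finset.mul_sum]
  exact Finset.sum_congr rfl fun i _ => by simp [mul_assoc]

lemma dot_neg_left (a b : Fin n → ℝ) : dot (-a) b = - dot a b := by
  unfold dot; rw [← Finset.sum_neg_distrib]
  exact Finset.sum_congr rfl fun i _ => by simp

lemma dot_zero_left (b : Fin n → ℝ) : dot 0 b = 0 := by
  unfold dot; simp

lemma dot_add_right (a b c : Fin n → ℝ) : dot a (b + c) = dot a b + dot a c := by
  rw [dot_comm, dot_add_left, dot_comm b a, dot_comm c a]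

lemma dot_sub_right (a b c : Fin n → ℝ) : dot a (b - c) = dot a b - dot a c := by
  rw [dot_comm, dot_sub_left, dot_comm b a, dot_comm c a]

lemma dot_smul_right (r : ℝ) (a b : Fin n → ℝ) : dot a (r • b) = r * dot a b := by
  rw [dot_comm, dot_smul_left, dot_comm]

lemma dot_neg_right (a b : Fin n → ℝ) : dot a (-b) = - dot a b := by
  rw [dot_comm, dot_neg_left, dot_comm]

lemma dot_zero_right (a : Fin n → ℝ) : dot a 0 = 0 := by
  rw [dot_comm, dot_zero_left]

lemma dot_self_nonneg (a : Fin n → ℝ) : 0 ≤ dot a a :=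
  Finset.sum_nonneg fun i _ => mul_self_nonneg _

lemma dot_self_eq_zero {a : Fin n → ℝ} : dot a a = 0 ↔ a = 0 := by
  unfold dot
  rw [Finset.sum_eq_zero_iff_of_nonneg fun i _ => mul_self_nonneg (a i)]
  constructor
  · intro h; funext i; exact mul_self_eq_zero.mp (h i (Finset.mem_univ i))
  · intro h i _; rw [h]; simp


def mk (a b : Fin n → ℝ) : Fin n → ℂ := fun i => ⟨a i, b i⟩

@[simp] lemma mk_re (a b : Fin n → ℝ) (i : Fin n) : (mk a b i).re = a i := rfl
@[simp] lemma mk_im (a b : Fin n → ℝ) (i : Fin n) : (mk a b i).im = b i := rfl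

lemma mk_re_im (X : Fin n → ℂ) : mk (fun i => (X i).re) (fun i => (X i).im) = X := by
  funext i; rfl

lemma conj_mk (a b : Fin n → ℝ) :
    (fun i => (starRingEnd ℂ) (mk a b i)) = mk a (-b) := by
  funext i
  apply Complex.ext <;> simp [mk]

lemma mk_eq_iff {a b a' b' : Fin n → ℝ} : mk a b = mk a' b' ↔ a = a' ∧ b = b' := by
  constructor
  · intro h
    constructor <;> funext i
    · exact congrArg Complex.re (congrFun h i)
    · exact congrArg Complex.im (congrFun h i)
  · rintro ⟨rfl, rfl⟩; rfl

lemma phi_one_iff (a b c d : Fin n → ℝ) :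
    phi n (mk a b) (mk c d) = 1 ↔
      dot (a - c) (a - c) - dot (b - d) (b - d) = 1 ∧ dot (a - c) (b - d) = 0 := by
  have hre : (phi n (mk a b) (mk c d)).re
      = dot (a - c) (a - c) - dot (b - d) (b - d) := by
    unfold phi dot
    rw [Complex.re_sum, ← Finset.sum_sub_distrib]
    refine Finset.sum_congr rfl fun i _ => ?_
    simp [pow_two, Complex.mul_re, Complex.sub_re, Complex.sub_im, Pi.sub_apply]
  have him : (phi n (mk a b) (mk c d)).im = 2 * dot (a - c) (b - d) := by
    unfold phi dot
    rw [Complex.im_sum, Finset.mul_sum]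
    refine Finset.sum_congr rfl fun i _ => ?_
    simp [pow_two, Complex.mul_im, Complex.sub_re, Complex.sub_im, Pi.sub_apply]
    ring
  rw [Complex.ext_iff, hre, him, Complex.one_re, Complex.one_im]
  constructor
  · rintro ⟨h1, h2⟩; exact ⟨h1, by linarith⟩
  · rintro ⟨h1, h2⟩; exact ⟨h1, by rw [h2]; ring⟩

lemma exists_orth (hn : 2 ≤ n) {b : Fin n → ℝ} (hb : b ≠ 0) :
    ∃ v : Fin n → ℝ, dot v b = 0 ∧ v ≠ 0 := by
  have : ∃ j, b j ≠ 0 := by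
    by_contra h
    push_neg at h
    exact hb (funext h)
  obtain ⟨j, hj⟩ := this
  have : Nontrivial (Fin n) := Fin.nontrivial_iff_two_le.mpr hn
  obtain ⟨k, hk⟩ := exists_ne j
  refine ⟨Pi.single k (b j) - Pi.single j (b k), ?_, ?_⟩
  · have h1 : dot (Pi.single k (b j)) b = b j * b k := by
      unfold dot
      rw [Finset.sum_eq_single k]
      · simp
      · intro i _ hik; simp [Pi.single_apply, hik]
      · simp
    have h2 : dot (Pi.single j (b k)) b = b k * b j := by
      unfold dot
      rw [Finset.sum_eq_single j]
      · simp
      · intro i _ hij; simp [Pi.single_apply, hij]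
      · simp
    rw [dot_sub_left, h1, h2, mul_comm, sub_self]
  · intro h
    have := congrFun h k
    simp [Pi.single_apply, hk] at this
    exact hj this

/-- There is a vector orthogonal to `b` with prescribed square-norm `c ≥ 0`. -/
lemma exists_orth_nrm (hn : 2 ≤ n) (b : Fin n → ℝ) {c : ℝ} (hc : 0 ≤ c) :
    ∃ u : Fin n → ℝ, dot u b = 0 ∧ dot u u = c := by
  have hv : ∃ v : Fin n → ℝ, dot v b = 0 ∧ v ≠ 0 := by
    by_cases hb : b = 0
    · have : NeZero n := ⟨by omega⟩
      refine ⟨Pi.single 0 1, by rw [hb, dot_zero_right], ?_⟩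
      intro h
      have := congrFun h 0
      simp at this
    · exact exists_orth hn hb
  obtain ⟨v, hvb, hv0⟩ := hv
  have hvv : 0 < dot v v := by
    rcases lt_or_eq_of_le (dot_self_nonneg v) with h | h
    · exact h
    · exact absurd (dot_self_eq_zero.mp h.symm) hv0
  refine ⟨Real.sqrt (c / dot v v) • v, ?_, ?_⟩
  · rw [dot_smul_left, hvb, mul_zero]
  · rw [dot_smul_left, dot_smul_right, ← mul_assoc,
      Real.mul_self_sqrt (div_nonneg hc hvv.le), div_mul_cancel₀ _ (ne_of_gt hvv)]

lemma dot_expand_add (w u : Fin n → ℝ) :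
    dot (w + u) (w + u) = dot w w + 2 * dot w u + dot u u := by
  rw [dot_add_left, dot_add_right, dot_add_right, dot_comm u w]; ring

/-- Pinning: if the image point `(c,d)` is at unit φ-distance from every real point at
unit φ-distance from `(a,b)`, then `c = a` and `d = ± b`. -/
lemma pin (hn : 2 ≤ n) {a b c d : Fin n → ℝ} (hb : b ≠ 0)
    (H : ∀ y : Fin n → ℝ, dot (a - y) (a - y) = 1 + dot b b → dot (a - y) b = 0 →
      dot (c - y) (c - y) - dot d d = 1 ∧ dot (c - y) d = 0) :
    c = a ∧ (d = b ∨ d = -b) := by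
  set w := c - a with hw
  have hB : dot b b ≠ 0 := fun h => hb (dot_self_eq_zero.mp h)
  have hBpos : 0 < 1 + dot b b := by
    have := dot_self_nonneg b; linarith
  have H' : ∀ u : Fin n → ℝ, dot u b = 0 → dot u u = 1 + dot b b →
      dot (w + u) (w + u) - dot d d = 1 ∧ dot (w + u) d = 0 := by
    intro u hub huu
    have h1 : a - (a - u) = u := by abel
    have h2 : c - (a - u) = w + u := by rw [hw]; abel
    have := H (a - u) (by rw [h1, huu]) (by rw [h1]; exact hub)
    rwa [h2] at this
  have key : ∀ u : Fin n → ℝ, dot u b = 0 → dot u u = 1 + dot b b →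
      dot w u = 0 ∧ dot u d = 0 ∧ (dot w w + dot b b = dot d d ∧ dot w d = 0) := by
    intro u hub huu
    have hp := H' u hub huu
    have hm := H' (-u) (by rw [dot_neg_left, hub, neg_zero])
      (by rw [dot_neg_left, dot_neg_right, huu]; ring_nf)
    rw [dot_expand_add] at hp hm
    rw [dot_neg_right, dot_neg_left, dot_neg_right] at hm
    have hadd : dot (w + u) d = dot w d + dot u d := dot_add_left w u d
    have hadd' : dot (w + -u) d = dot w d + - dot u d := by
      rw [dot_add_left, dot_neg_left]
    rw [hadd] at hp; rw [hadd'] at hm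
    have hwu : dot w u = 0 := by
      have := hp.1; have := hm.1
      nlinarith [hp.1, hm.1]
    have hud : dot u d = 0 := by linarith [hp.2, hm.2]
    refine ⟨hwu, hud, ?_, by linarith [hp.2, hm.2]⟩
    have := hp.1
    rw [hwu, huu] at this
    linarith
  -- one admissible u exists
  obtain ⟨u0, hu0b, hu0u⟩ := exists_orth_nrm hn b hBpos.le
  obtain ⟨-, -, hWD, hwd⟩ := key u0 hu0b hu0u
  -- orthogonality to the whole hyperplane
  have orth_all : ∀ v : Fin n → ℝ, dot v b = 0 → dot w v = 0 ∧ dot d v = 0 := by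
    intro v hvb
    by_cases hv : v = 0
    · subst hv; rw [dot_zero_right, dot_zero_right]; exact ⟨rfl, rfl⟩
    · have hvv : 0 < dot v v := by
        rcases lt_or_eq_of_le (dot_self_nonneg v) with h | h
        · exact h
        · exact absurd (dot_self_eq_zero.mp h.symm) hv
      set t := Real.sqrt ((1 + dot b b) / dot v v) with ht
      have htpos : 0 < t := Real.sqrt_pos.mpr (div_pos hBpos hvv)
      have hub : dot (t • v) b = 0 := by rw [dot_smul_left, hvb, mul_zero]
      have huu : dot (t • v) (t • v) = 1 + dot b b := by
        rw [dot_smul_left, dot_smul_right, ← mul_assoc, ht,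
          Real.mul_self_sqrt (div_nonneg hBpos.le hvv.le),
          div_mul_cancel₀ _ (ne_of_gt hvv)]
      obtain ⟨h1, h2, -⟩ := key (t • v) hub huu
      rw [dot_smul_right] at h1
      rw [dot_smul_left, dot_comm] at h2
      exact ⟨by
        rcases mul_eq_zero.mp h1 with h | h
        · exact absurd h (ne_of_gt htpos)
        · exact h, by
        rcases mul_eq_zero.mp h2 with h | h
        · exact absurd h (ne_of_gt htpos)
        · exact h⟩
  -- both w and d lie on the line through b
  have span : ∀ x : Fin n → ℝ, (∀ v : Fin n → ℝ, dot v b = 0 → dot x v = 0) →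
      x = (dot x b / dot b b) • b := by
    intro x hx
    set s := dot x b / dot b b with hs
    set v := x - s • b with hv
    have hvb : dot v b = 0 := by
      rw [hv, dot_sub_left, dot_smul_left, hs, div_mul_cancel₀ _ hB, sub_self]
    have hxv : dot x v = 0 := hx v hvb
    have hvv : dot v v = 0 := by
      have : dot v v = dot x v - s * dot b v := by
        rw [hv]
        conv_lhs => rw [dot_sub_left, dot_smul_left]
      rw [this, hxv, dot_comm b v, hvb, mul_zero, sub_zero]
    have := dot_self_eq_zero.mp hvv
    rw [hv, sub_eq_zero] at this
    exact this
  have hwspan := span w fun v hv => (orth_all v hv).1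
  have hdspan := span d fun v hv => (orth_all v hv).2
  set s := dot w b / dot b b
  set t := dot d b / dot b b
  -- scalar relations
  have hst : s * t * dot b b = 0 := by
    have : dot w d = s * t * dot b b := by
      conv_lhs => rw [hwspan, hdspan]
      rw [dot_smul_left, dot_smul_right, ← mul_assoc]
    rw [← this, hwd]
  have hst0 : s * t = 0 := by
    rcases mul_eq_zero.mp hst with h | h
    · exact h
    · exact absurd h hB
  have hsq : (s * s + 1) * dot b b = t * t * dot b b := by
    have h1 : dot w w = s * s * dot b b := by
      conv_lhs => rw [hwspan]
      rw [dot_smul_left, dot_smul_right, ← mul_assoc]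
    have h2 : dot d d = t * t * dot b b := by
      conv_lhs => rw [hdspan]
      rw [dot_smul_left, dot_smul_right, ← mul_assoc]
    rw [h1, h2] at hWD
    linarith
  have hsq' : s * s + 1 = t * t := by
    have := mul_right_cancel₀ hB hsq
    linarith [this]
  have hs0 : s = 0 := by
    rcases mul_eq_zero.mp hst0 with h | h
    · exact h
    · exfalso; rw [h] at hsq'; nlinarith
  have ht1 : t = 1 ∨ t = -1 := by
    rw [hs0] at hsq'
    exact mul_self_eq_one_iff.mp (by linarith)
  constructor
  · have : w = 0 := by rw [hwspan, hs0, zero_smul]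
    rw [hw, sub_eq_zero] at this; exact this
  · rcases ht1 with h | h
    · left; rw [hdspan, h, one_smul]
    · right; rw [hdspan, h, neg_one_smul]


lemma dot_expand_sub (w u : Fin n → ℝ) :
    dot (w - u) (w - u) = dot w w - 2 * dot w u + dot u u := by
  rw [dot_sub_left, dot_sub_right, dot_sub_right, dot_comm u w]; ring

lemma le_four_pow : ∀ k : ℕ, (k : ℝ) ≤ 4 ^ k := by
  intro k
  induction k with
  | zero => norm_num
  | succ k ih =>
    have h1 : (1:ℝ) ≤ 4 ^ k := one_le_pow₀ (by norm_num)
    rw [pow_succ]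
    push_cast
    nlinarith

def cnj (X : Fin n → ℂ) : Fin n → ℂ := fun i => (starRingEnd ℂ) (X i)

lemma cnj_mk (a b : Fin n → ℝ) : cnj (mk a b) = mk a (-b) := conj_mk a b

lemma ne_cnj {Y : Fin n → ℂ} (hY : (fun i => (Y i).im) ≠ (0 : Fin n → ℝ)) : Y ≠ cnj Y := by
  intro h
  apply hY
  funext i
  have := congrFun h i
  have him := congrArg Complex.im this
  simp [cnj] at him
  simp only [Pi.zero_apply]
  linarith

section withf
variable {f : (Fin n → ℂ) → (Fin n → ℂ)}

def linked (f : (Fin n → ℂ) → (Fin n → ℂ)) (X Y : Fin n → ℂ) : Prop :=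
  (f X = X ∧ f Y = Y) ∨ (f X = cnj X ∧ f Y = cnj Y)

lemma linked_symm {X Y : Fin n → ℂ} (h : linked f X Y) : linked f Y X := by
  rcases h with ⟨h1, h2⟩ | ⟨h1, h2⟩
  · exact Or.inl ⟨h2, h1⟩
  · exact Or.inr ⟨h2, h1⟩

lemma linked_trans {X Y Z : Fin n → ℂ} (hY : (fun i => (Y i).im) ≠ (0 : Fin n → ℝ))
    (h1 : linked f X Y) (h2 : linked f Y Z) : linked f X Z := by
  have hYc := ne_cnj hY
  rcases h1 with ⟨ha, hb⟩ | ⟨ha, hb⟩ <;> rcases h2 with ⟨hc, hd⟩ | ⟨hc, hd⟩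
  · exact Or.inl ⟨ha, hd⟩
  · exact absurd (hb.symm.trans hc) hYc
  · exact absurd (hc.symm.trans hb) hYc
  · exact Or.inr ⟨ha, hd⟩

variable (hn : 2 ≤ n)
  (hf : ∀ X Y : Fin n → ℂ, phi n X Y = 1 ^ 2 → phi n (f X) (f Y) = 1 ^ 2)
  (hreal : ∀ X : Fin n → ℂ, (∀ i, (X i).im = 0) → f X = X)

include hn hf hreal

lemma pin_app {a b : Fin n → ℝ} (hb : b ≠ 0) :
    f (mk a b) = mk a b ∨ f (mk a b) = mk a (-b) := by
  set c : Fin n → ℝ := fun i => (f (mk a b) i).re with hc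
  set d : Fin n → ℝ := fun i => (f (mk a b) i).im with hd
  have hfx : f (mk a b) = mk c d := (mk_re_im _).symm
  have H : ∀ y : Fin n → ℝ, dot (a - y) (a - y) = 1 + dot b b → dot (a - y) b = 0 →
      dot (c - y) (c - y) - dot d d = 1 ∧ dot (c - y) d = 0 := by
    intro y h1 h2
    have hYreal : f (mk y 0) = mk y 0 := hreal _ (fun i => rfl)
    have hphi : phi n (mk a b) (mk y (0 : Fin n → ℝ)) = 1 := by
      rw [phi_one_iff]
      constructor
      · rw [sub_zero, h1]; ring
      · rw [sub_zero]; exact h2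
    have himg := hf _ _ (by rw [one_pow]; exact hphi)
    rw [one_pow, hfx, hYreal, phi_one_iff, sub_zero] at himg
    exact himg
  obtain ⟨hca, hdb⟩ := pin hn (by simpa using hb) H
  rcases hdb with h | h
  · left; rw [hfx, hca, h]
  · right; rw [hfx, hca, h]

lemma linked_of_edge {a a' b b' : Fin n → ℝ} (hbb' : dot b b' ≠ 0)
    (hphi : phi n (mk a b) (mk a' b') = 1) : linked f (mk a b) (mk a' b') := by
  have hb : b ≠ 0 := by rintro rfl; exact hbb' (dot_zero_left _)
  have hb' : b' ≠ 0 := by rintro rfl; exact hbb' (dot_zero_right _)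
  have himg := hf _ _ (by rw [one_pow]; exact hphi)
  rw [one_pow] at himg
  have hC := (phi_one_iff a b a' b').mp hphi
  rcases pin_app hn hf hreal hb (a := a) with h1 | h1 <;>
    rcases pin_app hn hf hreal hb' (a := a') with h2 | h2
  · exact Or.inl ⟨h1, h2⟩
  · exfalso
    rw [h1, h2, phi_one_iff] at himg
    have hkey : dot (b - -b') (b - -b') = dot (b + b') (b + b') := by
      rw [sub_neg_eq_add]
    rw [hkey] at himg
    rw [dot_expand_add] at himg
    rw [dot_expand_sub b b'] at hC
    have := hC.1
    have := himg.1
    have : dot b b' = 0 := by linarith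
    exact hbb' this
  · exfalso
    rw [h1, h2, phi_one_iff] at himg
    have hkey : (-b) - b' = -(b + b') := by abel
    rw [hkey, dot_neg_left, dot_neg_right, neg_neg, dot_expand_add] at himg
    rw [dot_expand_sub b b'] at hC
    have := hC.1
    have := himg.1
    have : dot b b' = 0 := by linarith
    exact hbb' this
  · exact Or.inr ⟨by rw [h1, cnj_mk], by rw [h2, cnj_mk]⟩


lemma linked_level_step {h p q : Fin n → ℝ} (hh : h ≠ 0)
    (hpq : dot (p - q) (p - q) = 1) : linked f (mk p h) (mk q h) := by
  apply linked_of_edge hn hf hreal (fun c => hh (dot_self_eq_zero.mp c))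
  rw [phi_one_iff, sub_self]
  exact ⟨by rw [dot_zero_left, hpq]; ring, dot_zero_right _⟩

lemma linked_level_two {h p q : Fin n → ℝ} (hh : h ≠ 0)
    (hpq : dot (p - q) (p - q) ≤ 4) : linked f (mk p h) (mk q h) := by
  set D := dot (p - q) (p - q) with hD
  have hD0 : 0 ≤ D := dot_self_nonneg _
  obtain ⟨u, hu1, hu2⟩ := exists_orth_nrm hn (p - q) (c := 1 - D / 4) (by linarith)
  set m := (1/2 : ℝ) • (p + q) + u with hm
  have hpm : p - m = (1/2 : ℝ) • (p - q) - u := by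
    funext i
    simp [hm, Pi.smul_apply, smul_eq_mul]
    ring
  have hqm : q - m = -((1/2 : ℝ) • (p - q) + u) := by
    funext i
    simp [hm, Pi.smul_apply, smul_eq_mul]
    ring
  have hsc : dot ((1/2 : ℝ) • (p - q)) ((1/2 : ℝ) • (p - q)) = D / 4 := by
    rw [dot_smul_left, dot_smul_right, ← hD]; ring
  have hscu : dot ((1/2 : ℝ) • (p - q)) u = 0 := by
    rw [dot_smul_left, dot_comm, hu1, mul_zero]
  have h1 : dot (p - m) (p - m) = 1 := by
    rw [hpm, dot_expand_sub, hsc, hscu, hu2]; ring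
  have h2 : dot (q - m) (q - m) = 1 := by
    rw [hqm, dot_neg_left, dot_neg_right, neg_neg, dot_expand_add, hsc, hscu, hu2]; ring
  have l1 := linked_level_step hn hf hreal hh h1
  have l2 := linked_level_step hn hf hreal hh h2
  exact linked_trans (Y := mk m h) (by simpa using hh) l1 (linked_symm l2)

lemma linked_level (hh : h ≠ 0) :
    ∀ (k : ℕ) (p q : Fin n → ℝ), dot (p - q) (p - q) ≤ 4 * 4 ^ k →
      linked f (mk p h) (mk q h) := by
  intro k
  induction k with
  | zero => intro p q hpq; exact linked_level_two hn hf hreal hh (by norm_num at hpq; linarith)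
  | succ k ih =>
    intro p q hpq
    set m := (1/2 : ℝ) • (p + q) with hm
    have hpm : p - m = (1/2 : ℝ) • (p - q) := by
      funext i
      simp [hm, Pi.smul_apply, smul_eq_mul]
      ring
    have hmq : m - q = (1/2 : ℝ) • (p - q) := by
      funext i
      simp [hm, Pi.smul_apply, smul_eq_mul]
      ring
    have hquarter : dot ((1/2 : ℝ) • (p - q)) ((1/2 : ℝ) • (p - q))
        = dot (p - q) (p - q) / 4 := by
      rw [dot_smul_left, dot_smul_right]; ring
    have hb : dot (p - q) (p - q) / 4 ≤ 4 * 4 ^ k := by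
      rw [pow_succ] at hpq; linarith
    have l1 := ih p m (by rw [hpm, hquarter]; exact hb)
    have l2 := ih m q (by rw [hmq, hquarter]; exact hb)
    exact linked_trans (Y := mk m h) (by simpa using hh) l1 l2

lemma linked_level_all (hh : h ≠ 0) (p q : Fin n → ℝ) :
    linked f (mk p h) (mk q h) := by
  obtain ⟨k, hk⟩ := exists_nat_ge (dot (p - q) (p - q))
  refine linked_level hn hf hreal hh k p q ?_
  have := le_four_pow k
  have h4 : (0:ℝ) ≤ 4 ^ k := by positivity
  linarith

lemma linked_cross {b h : Fin n → ℝ} (hbh : dot b h ≠ 0) (a : Fin n → ℝ) :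
    ∃ m, linked f (mk a b) (mk m h) := by
  obtain ⟨u, hu1, hu2⟩ := exists_orth_nrm hn (b - h) (c := 1 + dot (b - h) (b - h))
    (by linarith [dot_self_nonneg (b - h)])
  refine ⟨a + u, linked_of_edge hn hf hreal hbh ?_⟩
  have key : a - (a + u) = -u := by abel
  rw [phi_one_iff, key, dot_neg_left, dot_neg_left, dot_neg_right, neg_neg, hu1, hu2]
  exact ⟨by ring, neg_zero⟩

lemma linked_connect {a b a' b' : Fin n → ℝ} (hb : b ≠ 0) (hb' : b' ≠ 0) :
    linked f (mk a b) (mk a' b') := by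
  by_cases hbb' : dot b b' = 0
  · set h := b + b' with hhdef
    have hbh : dot b h ≠ 0 := by
      rw [hhdef, dot_add_right, hbb', add_zero]
      exact fun c => hb (dot_self_eq_zero.mp c)
    have hb'h : dot b' h ≠ 0 := by
      rw [hhdef, dot_add_right, dot_comm b' b, hbb', zero_add]
      exact fun c => hb' (dot_self_eq_zero.mp c)
    have hh : h ≠ 0 := fun c => hbh (by rw [c, dot_zero_right])
    obtain ⟨m1, l1⟩ := linked_cross hn hf hreal hbh a
    obtain ⟨m2, l2⟩ := linked_cross hn hf hreal hb'h a'
    have lmid := linked_level_all hn hf hreal hh m1 m2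
    have t1 := linked_trans (Y := mk m1 h) (by simpa using hh) l1 lmid
    exact linked_trans (Y := mk m2 h) (by simpa using hh) t1 (linked_symm l2)
  · obtain ⟨m, l1⟩ := linked_cross hn hf hreal hbb' a
    have l2 := linked_level_all hn hf hreal hb' m a'
    exact linked_trans (Y := mk m b') (by simpa using hb') l1 l2

end withf
end BQ

section
open BQ

/-- If n ≥ 2, f : ℂⁿ → ℂⁿ preserves unit distance and f is the identity on ℝⁿ,
then f is the identity of ℂⁿ or coordinatewise complex conjugation. -/
theorem stmt_2 (n : ℕ) (hn : 2 ≤ n) (f : (Fin n → ℂ) → (Fin n → ℂ))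
    (hf : ∀ X Y : Fin n → ℂ, phi n X Y = 1 ^ 2 → phi n (f X) (f Y) = 1 ^ 2)
    (hreal : ∀ X : Fin n → ℂ, (∀ i, (X i).im = 0) → f X = X) :
    (∀ X : Fin n → ℂ, f X = X) ∨
    (∀ X : Fin n → ℂ, f X = fun i => (starRingEnd ℂ) (X i)) := by
  classical
  have hnz : NeZero n := ⟨by omega⟩
  set e : Fin n → ℝ := Pi.single (0 : Fin n) (1 : ℝ) with he
  have he0 : e ≠ 0 := by
    intro h
    have := congrFun h 0
    simp [he] at this
  have hPim : (fun i => ((mk (0 : Fin n → ℝ) e) i).im) ≠ (0 : Fin n → ℝ) := he0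
  have hPcnj : cnj (mk (0 : Fin n → ℝ) e) = mk 0 (-e) := cnj_mk 0 e
  have decomp : ∀ X : Fin n → ℂ, X = mk (fun i => (X i).re) (fun i => (X i).im) :=
    fun X => (mk_re_im X).symm
  rcases pin_app hn hf hreal he0 (a := (0 : Fin n → ℝ)) with hPP | hPC
  · left
    intro X
    by_cases hb : (fun i => (X i).im) = (0 : Fin n → ℝ)
    · exact hreal X (fun i => congrFun hb i)
    · have hl := linked_connect hn hf hreal (a := fun i => (X i).re)
        (a' := (0 : Fin n → ℝ)) hb he0
      rw [← decomp X] at hl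
      rcases hl with ⟨h1, _⟩ | ⟨_, h2⟩
      · exact h1
      · have : mk (0 : Fin n → ℝ) e = cnj (mk (0 : Fin n → ℝ) e) := hPP.symm.trans h2
        exact absurd this (ne_cnj hPim)
  · right
    have hPC' : f (mk (0 : Fin n → ℝ) e) = cnj (mk (0 : Fin n → ℝ) e) :=
      hPC.trans hPcnj.symm
    intro X
    by_cases hb : (fun i => (X i).im) = (0 : Fin n → ℝ)
    · rw [hreal X (fun i => congrFun hb i)]
      funext i
      exact (Complex.conj_eq_iff_im.mpr (congrFun hb i)).symm
    · have hl := linked_connect hn hf hreal (a := fun i => (X i).re)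
        (a' := (0 : Fin n → ℝ)) hb he0
      rw [← decomp X] at hl
      rcases hl with ⟨_, h2⟩ | ⟨h1, _⟩
      · have : mk (0 : Fin n → ℝ) e = cnj (mk (0 : Fin n → ℝ) e) := h2.symm.trans hPC'
        exact absurd this (ne_cnj hPim)
      · exact h1

end
end

section
/- If n ≥ 2, f : ℂⁿ → ℂⁿ preserves unit distance, and f(X) = X for every X ∈ ℝⁿ, then for each X ∈ ℂⁿ either f(X) = X or f(X) = (τ,...,τ)(X). -/
lemma sumsq_pos {n : ℕ} (w : Fin n → ℝ) (hw : w ≠ 0) : 0 < ∑ i, w i * w i := by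
  obtain ⟨i, hi⟩ := Function.ne_iff.mp hw
  exact Finset.sum_pos' (fun j _ => mul_self_nonneg _)
    ⟨i, Finset.mem_univ i, mul_self_pos.mpr hi⟩

lemma scale_lemma {n : ℕ} (b w : Fin n → ℝ) (r : ℝ) (hr : 0 < r) (hw : w ≠ 0)
    (hbw : ∑ i, b i * w i = 0) :
    ∃ s : ℝ, 0 < s ∧ (∑ i, b i * (s * w i) = 0) ∧ (∑ i, (s * w i) * (s * w i) = r ^ 2) := by
  have hW : 0 < ∑ i, w i * w i := sumsq_pos w hw
  set W := ∑ i, w i * w i with hWdef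
  refine ⟨r / Real.sqrt W, div_pos hr (Real.sqrt_pos.mpr hW), ?_, ?_⟩
  · have : ∑ i, b i * (r / Real.sqrt W * w i) = (r / Real.sqrt W) * ∑ i, b i * w i := by
      rw [Finset.mul_sum]; exact Finset.sum_congr rfl fun i _ => by ring
    rw [this, hbw, mul_zero]
  · have : ∑ i, (r / Real.sqrt W * w i) * (r / Real.sqrt W * w i)
        = (r / Real.sqrt W) ^ 2 * ∑ i, w i * w i := by
      rw [Finset.mul_sum]; exact Finset.sum_congr rfl fun i _ => by ring
    rw [this, div_pow, Real.sq_sqrt hW.le, ← hWdef, div_mul_cancel₀ _ hW.ne']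

lemma span_lemma {n : ℕ} (b e : Fin n → ℝ) (r : ℝ) (hr : 0 < r) (hb : b ≠ 0)
    (h : ∀ v : Fin n → ℝ, ∑ i, b i * v i = 0 → ∑ i, v i * v i = r ^ 2 →
      ∑ i, e i * v i = 0) :
    ∃ l : ℝ, ∀ i, e i = l * b i := by
  have hB : 0 < ∑ i, b i * b i := sumsq_pos b hb
  set B := ∑ i, b i * b i with hBdef
  set l := (∑ i, e i * b i) / B with hl
  set w : Fin n → ℝ := fun i => e i - l * b i with hwdef
  have hbw : ∑ i, b i * w i = 0 := by
    have : ∑ i, b i * w i = (∑ i, e i * b i) - l * B := by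
      rw [hBdef, Finset.mul_sum, ← Finset.sum_sub_distrib]
      exact Finset.sum_congr rfl fun i _ => by simp [hwdef]; ring
    rw [this, hl, div_mul_cancel₀ _ hB.ne', sub_self]
  by_cases hw : w = 0
  · exact ⟨l, fun i => by have := congrFun hw i; simp [hwdef] at this; linarith⟩
  · exfalso
    obtain ⟨s, hs, hsv1, hsv2⟩ := scale_lemma b w r hr hw hbw
    have hev : ∑ i, e i * (s * w i) = 0 := h _ hsv1 hsv2
    have hew : ∑ i, e i * w i = 0 := by
      have : ∑ i, e i * (s * w i) = s * ∑ i, e i * w i := by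
        rw [Finset.mul_sum]; exact Finset.sum_congr rfl fun i _ => by ring
      rw [this] at hev
      rcases mul_eq_zero.mp hev with h' | h'
      · exact absurd h' hs.ne'
      · exact h'
    have hww : ∑ i, w i * w i = 0 := by
      have : ∑ i, w i * w i = (∑ i, e i * w i) - l * ∑ i, b i * w i := by
        rw [Finset.mul_sum, ← Finset.sum_sub_distrib]
        exact Finset.sum_congr rfl fun i _ => by simp [hwdef]; ring
      rw [this, hew, hbw, mul_zero, sub_zero]
    exact absurd hww (sumsq_pos w hw).ne'

lemma ortho_exists {n : ℕ} (hn : 2 ≤ n) (b : Fin n → ℝ) (hb : b ≠ 0) :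
    ∃ w : Fin n → ℝ, w ≠ 0 ∧ ∑ i, b i * w i = 0 := by
  obtain ⟨j, hj⟩ := Function.ne_iff.mp hb
  have : Nontrivial (Fin n) := Fin.nontrivial_iff_two_le.mpr hn
  obtain ⟨k, hk⟩ := exists_ne j
  refine ⟨fun i => (if i = k then b j else 0) + (if i = j then -(b k) else 0), ?_, ?_⟩
  · intro h
    have := congrFun h k
    simp [hk] at this
    exact hj this
  · have key : ∀ i, b i * ((if i = k then b j else 0) + (if i = j then -(b k) else 0))
        = (if i = k then b k * b j else 0) + (if i = j then b j * -(b k) else 0) := by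
      intro i
      by_cases h1 : i = k
      · subst h1; simp [hk]
      · by_cases h2 : i = j
        · subst h2; simp [h1]
        · simp [h1, h2]
    rw [Finset.sum_congr rfl fun i _ => key i, Finset.sum_add_distrib,
      Finset.sum_ite_eq' Finset.univ k, Finset.sum_ite_eq' Finset.univ j]
    simp; ring

/-- If n ≥ 2, f : ℂⁿ → ℂⁿ preserves unit distance and f is the identity on ℝⁿ,
then for each X ∈ ℂⁿ either f(X) = X or f(X) = (τ,...,τ)(X). -/
theorem stmt_3 (n : ℕ) (hn : 2 ≤ n) (f : (Fin n → ℂ) → (Fin n → ℂ))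
    (hf : ∀ X Y : Fin n → ℂ, phi n X Y = 1 ^ 2 → phi n (f X) (f Y) = 1 ^ 2)
    (hreal : ∀ X : Fin n → ℂ, (∀ i, (X i).im = 0) → f X = X) :
    ∀ X : Fin n → ℂ, f X = X ∨ f X = fun i => (starRingEnd ℂ) (X i) := by
  intro X
  by_cases hX : ∀ i, (X i).im = 0
  · left; exact hreal X hX
  set A : Fin n → ℝ := fun i => (X i).re with hA
  set b : Fin n → ℝ := fun i => (X i).im with hbdef
  have hb : b ≠ 0 := by
    intro h; apply hX; intro i
    simpa [hbdef] using congrFun h i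
  set B := ∑ i, b i * b i with hB
  have hBpos : 0 < B := sumsq_pos b hb
  have h1B : (0:ℝ) < 1 + B := by linarith
  set r := Real.sqrt (1 + B) with hrdef
  have hr : 0 < r := Real.sqrt_pos.mpr h1B
  have hr2 : r ^ 2 = 1 + B := Real.sq_sqrt h1B.le
  set C : Fin n → ℝ := fun i => (f X i).re with hC
  set d : Fin n → ℝ := fun i => (f X i).im with hd
  set e : Fin n → ℝ := fun i => C i - A i with he
  -- the two real equations for each admissible v
  have key : ∀ v : Fin n → ℝ, (∑ i, b i * v i = 0) → (∑ i, v i * v i = r ^ 2) →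
      (∑ i, ((e i + v i) * (e i + v i) - d i * d i) = 1) ∧
      (∑ i, d i * (e i + v i) = 0) := by
    intro v hv1 hv2
    set Y : Fin n → ℂ := fun i => ((A i - v i : ℝ) : ℂ) with hY
    have hXY : phi n X Y = 1 ^ 2 := by
      rw [phi, one_pow]
      apply Complex.ext
      · rw [Complex.re_sum]
        have hterm : ∀ i ∈ Finset.univ, ((X i - Y i) ^ 2).re = v i * v i - b i * b i := by
          intro i _
          simp only [hY, pow_two, Complex.mul_re, Complex.sub_re, Complex.sub_im,
            Complex.ofReal_re, Complex.ofReal_im, hA, hbdef]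
          ring
        rw [Finset.sum_congr rfl hterm, Finset.sum_sub_distrib, hv2, hr2, ← hB]
        simp
      · rw [Complex.im_sum]
        have hterm : ∀ i ∈ Finset.univ, ((X i - Y i) ^ 2).im = 2 * (b i * v i) := by
          intro i _
          simp only [hY, pow_two, Complex.mul_im, Complex.sub_re, Complex.sub_im,
            Complex.ofReal_re, Complex.ofReal_im, hA, hbdef]
          ring
        rw [Finset.sum_congr rfl hterm, ← Finset.mul_sum, hv1]
        simp
    have hfY : f Y = Y := hreal Y (fun i => by simp [hY])
    have hZ : phi n (f X) Y = 1 ^ 2 := by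
      have h0 := hf X Y hXY; rwa [hfY] at h0
    have hZ' : ∑ i, (f X i - Y i) ^ 2 = 1 := by rw [phi, one_pow] at hZ; exact hZ
    constructor
    · have hre := congrArg Complex.re hZ'
      rw [Complex.re_sum] at hre
      have hterm : ∀ i ∈ Finset.univ, ((f X i - Y i) ^ 2).re
          = (e i + v i) * (e i + v i) - d i * d i := by
        intro i _
        simp only [hY, pow_two, Complex.mul_re, Complex.sub_re, Complex.sub_im,
          Complex.ofReal_re, Complex.ofReal_im, he, hC, hd, hA]
        ring
      rw [Finset.sum_congr rfl hterm] at hre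
      simpa using hre
    · have him := congrArg Complex.im hZ'
      rw [Complex.im_sum] at him
      have hterm : ∀ i ∈ Finset.univ, ((f X i - Y i) ^ 2).im
          = 2 * (d i * (e i + v i)) := by
        intro i _
        simp only [hY, pow_two, Complex.mul_im, Complex.sub_re, Complex.sub_im,
          Complex.ofReal_re, Complex.ofReal_im, he, hC, hd, hA]
        ring
      rw [Finset.sum_congr rfl hterm, ← Finset.mul_sum] at him
      simp only [Complex.one_im] at him
      linarith
  -- negating an admissible v
  have hneg : ∀ v : Fin n → ℝ, (∑ i, b i * v i = 0) → (∑ i, v i * v i = r ^ 2) →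
      (∑ i, b i * (-v i) = 0) ∧ (∑ i, (-v i) * (-v i) = r ^ 2) := by
    intro v hv1 hv2
    constructor
    · have : ∑ i, b i * (-v i) = -∑ i, b i * v i := by
        rw [← Finset.sum_neg_distrib]
        exact Finset.sum_congr rfl fun i _ => by ring
      rw [this, hv1, neg_zero]
    · rw [← hv2]
      exact Finset.sum_congr rfl fun i _ => by ring
  have he_orth : ∀ v : Fin n → ℝ, ∑ i, b i * v i = 0 → ∑ i, v i * v i = r ^ 2 →
      ∑ i, e i * v i = 0 := by
    intro v hv1 hv2
    obtain ⟨E1, _⟩ := key v hv1 hv2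
    obtain ⟨hn1, hn2⟩ := hneg v hv1 hv2
    obtain ⟨E1', _⟩ := key (fun i => -v i) hn1 hn2
    have h4 : ∑ i, (4:ℝ) * (e i * v i) = 0 := by
      have hsub : ∑ i, (((e i + v i) * (e i + v i) - d i * d i)
          - ((e i + -v i) * (e i + -v i) - d i * d i)) = 0 := by
        rw [Finset.sum_sub_distrib, E1, E1', sub_self]
      rw [← hsub]
      exact Finset.sum_congr rfl fun i _ => by ring
    rw [← Finset.mul_sum] at h4
    linarith
  have hd_orth : ∀ v : Fin n → ℝ, ∑ i, b i * v i = 0 → ∑ i, v i * v i = r ^ 2 →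
      ∑ i, d i * v i = 0 := by
    intro v hv1 hv2
    obtain ⟨_, E2⟩ := key v hv1 hv2
    obtain ⟨hn1, hn2⟩ := hneg v hv1 hv2
    obtain ⟨_, E2'⟩ := key (fun i => -v i) hn1 hn2
    have h2 : ∑ i, (2:ℝ) * (d i * v i) = 0 := by
      have hsub : ∑ i, ((d i * (e i + v i)) - (d i * (e i + -v i))) = 0 := by
        rw [Finset.sum_sub_distrib, E2, E2', sub_self]
      rw [← hsub]
      exact Finset.sum_congr rfl fun i _ => by ring
    rw [← Finset.mul_sum] at h2
    linarith
  obtain ⟨l, hlam⟩ := span_lemma b e r hr hb he_orth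
  obtain ⟨m, hmu⟩ := span_lemma b d r hr hb hd_orth
  -- a specific admissible v
  obtain ⟨w, hw0, hbw⟩ := ortho_exists hn b hb
  obtain ⟨s, hs, hsv1, hsv2⟩ := scale_lemma b w r hr hw0 hbw
  obtain ⟨E1, E2⟩ := key (fun i => s * w i) hsv1 hsv2
  -- expand E1
  have hexp1 : ∑ i, ((e i + s * w i) * (e i + s * w i) - d i * d i)
      = l ^ 2 * B + 2 * l * (∑ i, b i * (s * w i)) + (∑ i, (s * w i) * (s * w i))
        - m ^ 2 * B := by
    rw [hB, Finset.mul_sum, Finset.mul_sum, Finset.mul_sum,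
      ← Finset.sum_add_distrib, ← Finset.sum_add_distrib, ← Finset.sum_sub_distrib]
    exact Finset.sum_congr rfl fun i _ => by rw [hlam i, hmu i]; ring
  rw [hexp1, hsv1, hsv2, hr2] at E1
  -- expand E2
  have hexp2 : ∑ i, d i * (e i + s * w i)
      = l * m * B + m * (∑ i, b i * (s * w i)) := by
    rw [hB, Finset.mul_sum, Finset.mul_sum, ← Finset.sum_add_distrib]
    exact Finset.sum_congr rfl fun i _ => by rw [hlam i, hmu i]; ring
  rw [hexp2, hsv1] at E2
  have hm2 : m ^ 2 = l ^ 2 + 1 := by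
    have h0 : (l ^ 2 + 1 - m ^ 2) * B = 0 := by nlinarith [E1]
    rcases mul_eq_zero.mp h0 with h' | h'
    · linarith
    · exact absurd h' hBpos.ne'
  have hlm : l * m = 0 := by
    have : l * m * B = 0 := by linarith
    rcases mul_eq_zero.mp this with h' | h'
    · exact h'
    · exact absurd h' hBpos.ne'
  have hl0 : l = 0 := by
    rcases mul_eq_zero.mp hlm with h' | h'
    · exact h'
    · exfalso; rw [h'] at hm2; nlinarith [sq_nonneg l]
  have hm1 : m = 1 ∨ m = -1 := by
    have : (m - 1) * (m + 1) = 0 := by nlinarith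
    rcases mul_eq_zero.mp this with h' | h'
    · left; linarith
    · right; linarith
  simp only [he, hC, hA, hbdef] at hlam hmu
  rcases hm1 with hm | hm
  · left
    funext i
    apply Complex.ext
    · have h := hlam i; rw [hl0, zero_mul] at h; simpa using by linarith [h]
    · have h := hmu i; rw [hm, one_mul] at h; simpa using h
  · right
    funext i
    apply Complex.ext
    · have h := hlam i; rw [hl0, zero_mul] at h
      simp only [Complex.conj_re]
      linarith [h]
    · have h := hmu i; rw [hm] at h
      simp only [Complex.conj_im]
      linarith [h]
end

section
/- Let n ≥ 2, let f : ℂⁿ → ℂⁿ preserve unit distance with f(X) = X for every X ∈ ℝⁿ, and let X, Y ∈ ℂⁿ satisfy φ_n(X,Y) = 1 and ψ_n(X,Y) ≠ 0. Then: if f(Y) = Y then f(X) = X, and if f(Y) = (τ,...,τ)(Y) then f(X) = (τ,...,τ)(X). -/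
/-- ψ_n(X,Y) = Σ_{k=1}^n Im(x_k)·Im(y_k). -/
def psi (n : ℕ) (X Y : Fin n → ℂ) : ℝ := ∑ k, (X k).im * (Y k).im

lemma phi_re (n : ℕ) (X Y : Fin n → ℂ) :
    (phi n X Y).re = ∑ i, (((X i).re - (Y i).re)^2 - ((X i).im - (Y i).im)^2) := by
  unfold phi
  rw [Complex.re_sum]
  refine Finset.sum_congr rfl fun i _ => ?_
  simp [pow_two, Complex.mul_re, Complex.sub_re, Complex.sub_im]


lemma phi_im (n : ℕ) (X Y : Fin n → ℂ) :
    (phi n X Y).im = ∑ i, 2*((X i).re - (Y i).re)*((X i).im - (Y i).im) := by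
  unfold phi
  rw [Complex.im_sum]
  refine Finset.sum_congr rfl fun i _ => ?_
  simp [pow_two, Complex.mul_im, Complex.sub_re, Complex.sub_im]
  ring


lemma phi_one_iff (n : ℕ) (X Y : Fin n → ℂ) :
    phi n X Y = 1 ↔ (∑ i, (((X i).re - (Y i).re)^2 - ((X i).im - (Y i).im)^2) = 1
      ∧ ∑ i, 2*((X i).re - (Y i).re)*((X i).im - (Y i).im) = 0) := by
  rw [Complex.ext_iff, phi_re, phi_im, Complex.one_re, Complex.one_im]

lemma ortho_span (n : ℕ) (B V : Fin n → ℝ) (hB : ∑ i, B i ^ 2 ≠ 0)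
    (H : ∀ u : Fin n → ℝ, (∑ i, u i * B i = 0) → (∑ i, u i ^ 2 = 1) →
      ∑ i, V i * u i = 0) :
    ∃ c : ℝ, ∀ i, V i = c * B i := by
  set c : ℝ := (∑ i, V i * B i) / (∑ i, B i ^ 2) with hc
  set V' : Fin n → ℝ := fun i => V i - c * B i with hV'
  have h1 : ∑ i, V' i * B i = 0 := by
    have : ∀ i, V' i * B i = V i * B i - c * B i ^ 2 := fun i => by simp [hV']; ring
    rw [Finset.sum_congr rfl fun i _ => this i, Finset.sum_sub_distrib, ← Finset.mul_sum,
      hc, div_mul_cancel₀ _ hB, sub_self]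
  by_cases ht : ∑ i, V' i ^ 2 = 0
  · refine ⟨c, fun i => ?_⟩
    have hz : ∀ i ∈ Finset.univ, V' i ^ 2 = 0 := by
      intro i _
      exact (Finset.sum_eq_zero_iff_of_nonneg (fun i _ => sq_nonneg _)).mp ht i (Finset.mem_univ i)
    have := pow_eq_zero_iff (n := 2) (by norm_num) |>.mp (hz i (Finset.mem_univ i))
    have : V i - c * B i = 0 := this
    linarith
  · exfalso
    set t : ℝ := ∑ i, V' i ^ 2 with htdef
    have htpos : 0 < t := lt_of_le_of_ne (Finset.sum_nonneg fun i _ => sq_nonneg _) (Ne.symm ht)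
    set u : Fin n → ℝ := fun i => V' i / Real.sqrt t with hu
    have hst : Real.sqrt t ^ 2 = t := Real.sq_sqrt htpos.le
    have hstne : Real.sqrt t ≠ 0 := by positivity
    have huB : ∑ i, u i * B i = 0 := by
      have : ∀ i, u i * B i = (V' i * B i) / Real.sqrt t := fun i => by simp [hu]; ring
      rw [Finset.sum_congr rfl fun i _ => this i, ← Finset.sum_div, h1, zero_div]
    have huu : ∑ i, u i ^ 2 = 1 := by
      have : ∀ i, u i ^ 2 = V' i ^ 2 / t := fun i => by
        simp only [hu, div_pow, hst]
      rw [Finset.sum_congr rfl fun i _ => this i, ← Finset.sum_div, ← htdef, div_self htpos.ne']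
    have hVu := H u huB huu
    have hVV' : ∑ i, V i * V' i = t := by
      have : ∀ i, V i * V' i = V' i ^ 2 + c * (V' i * B i) := fun i => by simp [hV']; ring
      rw [Finset.sum_congr rfl fun i _ => this i, Finset.sum_add_distrib, ← Finset.mul_sum, h1]
      simp [htdef]
    have hts : ∑ i, V i * u i = t / Real.sqrt t := by
      have : ∀ i, V i * u i = (V i * V' i) / Real.sqrt t := fun i => by simp [hu]; ring
      rw [Finset.sum_congr rfl fun i _ => this i, ← Finset.sum_div, hVV']
    rw [hVu] at hts
    have := (div_eq_zero_iff.mp hts.symm).resolve_right hstne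
    exact htpos.ne' this

lemma fix_or_conj (n : ℕ) (hn : 2 ≤ n) (f : (Fin n → ℂ) → (Fin n → ℂ))
    (hf : ∀ X Y : Fin n → ℂ, phi n X Y = 1 ^ 2 → phi n (f X) (f Y) = 1 ^ 2)
    (hreal : ∀ X : Fin n → ℂ, (∀ i, (X i).im = 0) → f X = X)
    (Z : Fin n → ℂ) :
    f Z = Z ∨ f Z = fun k => (starRingEnd ℂ) (Z k) := by
  by_cases hZr : ∀ i, (Z i).im = 0
  · exact Or.inl (hreal Z hZr)
  push_neg at hZr
  obtain ⟨j, hj⟩ := hZr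
  set A : Fin n → ℝ := fun i => (Z i).re with hA
  set B : Fin n → ℝ := fun i => (Z i).im with hB
  have hBj : B j ≠ 0 := by simpa [hB] using hj
  have hB2pos : 0 < ∑ i, B i ^ 2 :=
    Finset.sum_pos' (fun i _ => sq_nonneg _) ⟨j, Finset.mem_univ j, by positivity⟩
  set s : ℝ := Real.sqrt (1 + ∑ i, B i ^ 2) with hs
  have hs2 : s ^ 2 = 1 + ∑ i, B i ^ 2 := Real.sq_sqrt (by positivity)
  have hspos : 0 < s := Real.sqrt_pos.mpr (by positivity)
  set W := f Z with hWdef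
  set C : Fin n → ℝ := fun i => (W i).re with hC
  set D : Fin n → ℝ := fun i => (W i).im with hD
  -- distance from W to suitable real points
  have hWdist : ∀ (u : Fin n → ℝ) (ε : ℝ), (∑ i, u i * B i = 0) → (∑ i, u i ^ 2 = 1) →
      ε ^ 2 = s ^ 2 → phi n W (fun i => ((A i + ε * u i : ℝ) : ℂ)) = 1 := by
    intro u ε hu h1 he
    set R : Fin n → ℂ := fun i => ((A i + ε * u i : ℝ) : ℂ) with hR
    have hRim : ∀ i, (R i).im = 0 := fun i => by simp [hR]
    have hZR : phi n Z R = 1 := by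
      rw [phi_one_iff]
      constructor
      · have h2 : ∀ i, ((Z i).re - (R i).re)^2 - ((Z i).im - (R i).im)^2
            = ε^2 * u i^2 - B i^2 := by
          intro i
          simp only [hR, hA, hB, Complex.ofReal_re, Complex.ofReal_im]
          ring
        rw [Finset.sum_congr rfl fun i _ => h2 i, Finset.sum_sub_distrib, ← Finset.mul_sum,
          h1, he, hs2]
        ring
      · have h2 : ∀ i, 2*((Z i).re - (R i).re)*((Z i).im - (R i).im)
            = (-2*ε) * (u i * B i) := by
          intro i
          simp only [hR, hA, hB, Complex.ofReal_re, Complex.ofReal_im]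
          ring
        rw [Finset.sum_congr rfl fun i _ => h2 i, ← Finset.mul_sum, hu, mul_zero]
    have h3 := hf Z R (by rw [one_pow]; exact hZR)
    rw [hreal R hRim, one_pow] at h3
    exact h3
  -- the four basic identities
  have hmain : ∀ u : Fin n → ℝ, (∑ i, u i * B i = 0) → (∑ i, u i ^ 2 = 1) →
      ((∑ i, (C i - A i) * u i = 0) ∧ (∑ i, u i * D i = 0) ∧
       ((∑ i, (C i - A i)^2) + s^2 - (∑ i, D i^2) = 1) ∧
       (∑ i, (C i - A i) * D i = 0)) := by
    intro u hu h1
    have key : ∀ ε : ℝ, ε ^ 2 = s ^ 2 →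
        ((∑ i, (C i - A i)^2) - 2*ε*(∑ i, (C i - A i)*u i) + ε^2 - (∑ i, D i^2) = 1)
        ∧ (2*(∑ i, (C i - A i)*D i) - 2*ε*(∑ i, u i * D i) = 0) := by
      intro ε he
      have hp := (phi_one_iff n W (fun i => ((A i + ε * u i : ℝ) : ℂ))).mp
        (hWdist u ε hu h1 he)
      obtain ⟨hpre, hpim⟩ := hp
      constructor
      · have h2 : ∀ i, ((W i).re - ((fun i => ((A i + ε * u i : ℝ) : ℂ)) i).re)^2
            - ((W i).im - ((fun i => ((A i + ε * u i : ℝ) : ℂ)) i).im)^2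
            = (((C i - A i)^2 - 2*ε*((C i - A i)*u i)) + (ε^2 * u i^2 - D i^2)) := by
          intro i
          simp only [hC, hD, Complex.ofReal_re, Complex.ofReal_im]
          ring
        rw [Finset.sum_congr rfl fun i _ => h2 i, Finset.sum_add_distrib,
          Finset.sum_sub_distrib, Finset.sum_sub_distrib, ← Finset.mul_sum,
          ← Finset.mul_sum, h1] at hpre
        linarith
      · have h2 : ∀ i, 2*((W i).re - ((fun i => ((A i + ε * u i : ℝ) : ℂ)) i).re)
            *((W i).im - ((fun i => ((A i + ε * u i : ℝ) : ℂ)) i).im)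
            = (2*((C i - A i) * D i) - 2*ε*(u i * D i)) := by
          intro i
          simp only [hC, hD, Complex.ofReal_re, Complex.ofReal_im]
          ring
        rw [Finset.sum_congr rfl fun i _ => h2 i, Finset.sum_sub_distrib,
          ← Finset.mul_sum, ← Finset.mul_sum] at hpim
        linarith
    obtain ⟨r1, i1⟩ := key s rfl
    obtain ⟨r2, i2⟩ := key (-s) (by ring)
    have hQ : s * (∑ i, (C i - A i)*u i) = 0 := by linarith
    have hQ0 : ∑ i, (C i - A i)*u i = 0 := (mul_eq_zero.mp hQ).resolve_left hspos.ne'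
    have hS2 : s * (∑ i, u i * D i) = 0 := by linarith
    have hS20 : ∑ i, u i * D i = 0 := (mul_eq_zero.mp hS2).resolve_left hspos.ne'
    refine ⟨hQ0, hS20, by nlinarith, by linarith⟩
  -- a concrete unit vector orthogonal to B
  have : Nontrivial (Fin n) := Fin.nontrivial_iff_two_le.mpr hn
  obtain ⟨k, hk⟩ := exists_ne j
  set v : Fin n → ℝ := fun i => if i = k then B j else if i = j then -(B k) else 0 with hv
  have hvB : ∑ i, v i * B i = 0 := by
    have h2 : ∀ i, v i * B i
        = (if i = k then B j * B k else 0) + (if i = j then -(B k * B j) else 0) := by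
      intro i
      by_cases h1 : i = k
      · subst h1; simp [hv, hk]
      · by_cases h3 : i = j <;> simp [hv, h1, h3, Ne.symm hk]
    rw [Finset.sum_congr rfl fun i _ => h2 i, Finset.sum_add_distrib,
      Finset.sum_ite_eq' Finset.univ, Finset.sum_ite_eq' Finset.univ]
    simp; ring
  have hv2 : ∑ i, v i ^ 2 = B j ^ 2 + B k ^ 2 := by
    have h2 : ∀ i, v i ^ 2
        = (if i = k then B j ^ 2 else 0) + (if i = j then B k ^ 2 else 0) := by
      intro i
      by_cases h1 : i = k
      · subst h1; simp [hv, hk]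
      · by_cases h3 : i = j <;> simp [hv, h1, h3, Ne.symm hk]
    rw [Finset.sum_congr rfl fun i _ => h2 i, Finset.sum_add_distrib,
      Finset.sum_ite_eq' Finset.univ, Finset.sum_ite_eq' Finset.univ]
    simp
  have hv2pos : 0 < ∑ i, v i ^ 2 := by rw [hv2]; positivity
  set u0 : Fin n → ℝ := fun i => v i / Real.sqrt (∑ i, v i ^ 2) with hu0
  have hstv : Real.sqrt (∑ i, v i ^ 2) ^ 2 = ∑ i, v i ^ 2 := Real.sq_sqrt hv2pos.le
  have hu0B : ∑ i, u0 i * B i = 0 := by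
    have h2 : ∀ i, u0 i * B i = (v i * B i) / Real.sqrt (∑ i, v i ^ 2) := fun i => by
      simp [hu0]; ring
    rw [Finset.sum_congr rfl fun i _ => h2 i, ← Finset.sum_div, hvB, zero_div]
  have hu0sq : ∑ i, u0 i ^ 2 = 1 := by
    have h2 : ∀ i, u0 i ^ 2 = v i ^ 2 / (∑ i, v i ^ 2) := fun i => by
      simp only [hu0, div_pow, hstv]
    rw [Finset.sum_congr rfl fun i _ => h2 i, ← Finset.sum_div, div_self hv2pos.ne']
  obtain ⟨-, -, h3, h4⟩ := hmain u0 hu0B hu0sq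
  -- V = C - A and D are multiples of B
  obtain ⟨μ, hμ⟩ := ortho_span n B (fun i => C i - A i) hB2pos.ne'
    (fun u hu h1 => (hmain u hu h1).1)
  obtain ⟨lam, hlam⟩ := ortho_span n B D hB2pos.ne'
    (fun u hu h1 => by
      have := (hmain u hu h1).2.1
      rw [Finset.sum_congr rfl fun i _ => mul_comm (D i) (u i)]
      exact this)
  have hP : ∑ i, (C i - A i)^2 = μ^2 * ∑ i, B i ^ 2 := by
    have h2 : ∀ i, (C i - A i)^2 = μ^2 * B i ^ 2 := fun i => by rw [hμ i]; ring
    rw [Finset.sum_congr rfl fun i _ => h2 i, ← Finset.mul_sum]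
  have hDD : ∑ i, D i ^ 2 = lam^2 * ∑ i, B i ^ 2 := by
    have h2 : ∀ i, D i ^ 2 = lam^2 * B i ^ 2 := fun i => by rw [hlam i]; ring
    rw [Finset.sum_congr rfl fun i _ => h2 i, ← Finset.mul_sum]
  have hS1 : ∑ i, (C i - A i) * D i = (μ * lam) * ∑ i, B i ^ 2 := by
    have h2 : ∀ i, (C i - A i) * D i = (μ * lam) * B i ^ 2 := fun i => by
      rw [hμ i, hlam i]; ring
    rw [Finset.sum_congr rfl fun i _ => h2 i, ← Finset.mul_sum]
  rw [hS1] at h4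
  have hml : μ * lam = 0 := (mul_eq_zero.mp h4).resolve_right hB2pos.ne'
  have hlam2 : lam ^ 2 = μ ^ 2 + 1 := by
    rw [hP, hDD, hs2] at h3
    have h5 : (μ^2 + 1 - lam^2) * ∑ i, B i ^ 2 = 0 := by ring_nf; ring_nf at h3; linarith
    have := (mul_eq_zero.mp h5).resolve_right hB2pos.ne'
    linarith
  have hμ0 : μ = 0 := by
    rcases mul_eq_zero.mp hml with h | h
    · exact h
    · exfalso; rw [h] at hlam2; nlinarith
  have hlam1 : lam = 1 ∨ lam = -1 := by
    have h5 : (lam - 1) * (lam + 1) = 0 := by nlinarith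
    rcases mul_eq_zero.mp h5 with h | h
    · left; linarith
    · right; linarith
  have hre : ∀ i, (W i).re = (Z i).re := by
    intro i
    have h5 := hμ i
    rw [hμ0, zero_mul, sub_eq_zero] at h5
    simpa [hC, hA] using h5
  rcases hlam1 with h | h
  · left
    funext i
    apply Complex.ext (hre i)
    have h5 := hlam i
    rw [h, one_mul] at h5
    simpa [hD, hB] using h5
  · right
    funext i
    apply Complex.ext
    · simpa using hre i
    · have h5 := hlam i
      rw [h] at h5
      have : (W i).im = -(Z i).im := by simpa [hD, hB] using h5
      simpa using this

lemma phi_conj (n : ℕ) (X Y : Fin n → ℂ) :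
    phi n (fun k => (starRingEnd ℂ) (X k)) (fun k => (starRingEnd ℂ) (Y k))
      = (starRingEnd ℂ) (phi n X Y) := by
  unfold phi
  rw [map_sum]
  exact Finset.sum_congr rfl fun i _ => by simp

lemma psi_zero_of (n : ℕ) (X Y : Fin n → ℂ) (h1 : phi n X Y = 1)
    (h2 : phi n (fun k => (starRingEnd ℂ) (X k)) Y = 1) : psi n X Y = 0 := by
  have e1 := ((phi_one_iff n X Y).mp h1).1
  have e2 := ((phi_one_iff n (fun k => (starRingEnd ℂ) (X k)) Y).mp h2).1
  simp only [Complex.conj_re, Complex.conj_im] at e2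
  have h4 : ∑ i, ((((X i).re - (Y i).re)^2 - ((X i).im - (Y i).im)^2)
      - (((X i).re - (Y i).re)^2 - (-(X i).im - (Y i).im)^2)) = 0 := by
    rw [Finset.sum_sub_distrib, e1, e2, sub_self]
  have h5 : ∀ i, ((((X i).re - (Y i).re)^2 - ((X i).im - (Y i).im)^2)
      - (((X i).re - (Y i).re)^2 - (-(X i).im - (Y i).im)^2))
      = (4:ℝ) * ((X i).im * (Y i).im) := fun i => by ring
  rw [Finset.sum_congr rfl fun i _ => h5 i, ← Finset.mul_sum] at h4
  have := (mul_eq_zero.mp h4).resolve_left (by norm_num)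
  simpa [psi] using this

/-- If n ≥ 2, f : ℂⁿ → ℂⁿ preserves unit distance and is the identity on ℝⁿ,
and X, Y ∈ ℂⁿ satisfy φ_n(X,Y) = 1 and ψ_n(X,Y) ≠ 0, then f(Y) = Y implies
f(X) = X, and f(Y) = (τ,...,τ)(Y) implies f(X) = (τ,...,τ)(X). -/
theorem stmt_5 (n : ℕ) (hn : 2 ≤ n) (f : (Fin n → ℂ) → (Fin n → ℂ))
    (hf : ∀ X Y : Fin n → ℂ, phi n X Y = 1 ^ 2 → phi n (f X) (f Y) = 1 ^ 2)
    (hreal : ∀ X : Fin n → ℂ, (∀ i, (X i).im = 0) → f X = X)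
    (X Y : Fin n → ℂ) (hXY : phi n X Y = 1) (hpsi : psi n X Y ≠ 0) :
    (f Y = Y → f X = X) ∧
    (f Y = (fun k => (starRingEnd ℂ) (Y k)) →
      f X = fun k => (starRingEnd ℂ) (X k)) := by
  have hfc := fix_or_conj n hn f hf hreal X
  have h1 : phi n (f X) (f Y) = 1 := by
    have := hf X Y (by rw [one_pow]; exact hXY)
    rwa [one_pow] at this
  constructor
  · intro hY
    rcases hfc with h | h
    · exact h
    · exfalso
      rw [h, hY] at h1
      exact hpsi (psi_zero_of n X Y hXY h1)
  · intro hY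
    rcases hfc with h | h
    · exfalso
      rw [h, hY] at h1
      have h3 := congrArg (starRingEnd ℂ) h1
      rw [← phi_conj] at h3
      simp only [Complex.conj_conj, map_one] at h3
      exact hpsi (psi_zero_of n X Y hXY h3)
    · exact h
end

section
/- Let n ≥ 2 and let f : ℂⁿ → ℂⁿ preserve unit distance with f(X) = X for every X ∈ ℝⁿ. Then for each X ∈ ℂⁿ \ ℝⁿ: if f((i,...,i)) = (i,...,i) then f(X) = X, and if f((i,...,i)) = (−i,...,−i) then f(X) = (τ,...,τ)(X). -/
/-!
Write a point of `ℂⁿ` as `A + iB` with `A, B ∈ ℝⁿ`. The real points at unit distance from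
`A + iB` form a sphere about `A` in the hyperplane through `A` orthogonal to `B`, and for `n ≥ 2`
it contains antipodal pairs in every direction orthogonal to `B`. Since `f` fixes them, `f(A + iB)`
is at unit distance from all of them, which forces `f(A + iB) ∈ {A + iB, A - iB}`.

Hence `f` fixes `W` as soon as it fixes some `Z` with `φ(W, Z) = 1 ≠ φ(W̄, Z)`. Starting from
`(i,…,i)`, unit steps then show that `f` fixes the slice `ℝⁿ + (i,…,i)`, and every non-real `X` has
such a neighbour `Z` in that slice. If `f((i,…,i)) = (−i,…,−i)`, apply this to `τ ∘ f`.
-/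

section Geometry

variable {ι : Type*} [Fintype ι]

lemma dotProduct_self_nonneg (v : ι → ℝ) : 0 ≤ v ⬝ᵥ v :=
  Finset.sum_nonneg fun i _ => mul_self_nonneg (v i)

lemma dotProduct_self_pos {v : ι → ℝ} (hv : v ≠ 0) : 0 < v ⬝ᵥ v :=
  (dotProduct_self_nonneg v).lt_of_ne' (dotProduct_self_eq_zero.not.2 hv)

lemma exists_smul_dotProduct_self_eq {v : ι → ℝ} (hv : v ≠ 0) {r : ℝ} (hr : 0 ≤ r) :
    ∃ t : ℝ, (t • v) ⬝ᵥ (t • v) = r := by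
  have hv' := dotProduct_self_pos hv
  refine ⟨√(r / v ⬝ᵥ v), ?_⟩
  rw [smul_dotProduct, dotProduct_smul, smul_eq_mul, smul_eq_mul, ← mul_assoc, ← sq,
    Real.sq_sqrt (by positivity), div_mul_cancel₀ _ hv'.ne']

lemma exists_dotProduct_eq_zero_dotProduct_self_eq [Nontrivial ι] (w : ι → ℝ) {r : ℝ}
    (hr : 0 ≤ r) : ∃ v, v ⬝ᵥ w = 0 ∧ v ⬝ᵥ v = r := by
  obtain ⟨v, hv, hvw⟩ := exists_ne_zero_dotProduct_eq_zero w
  obtain ⟨t, ht⟩ := exists_smul_dotProduct_self_eq hv hr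
  exact ⟨t • v, by rw [smul_dotProduct, hvw, smul_zero], ht⟩

lemma eq_smul_of_forall_dotProduct_eq_zero {w v : ι → ℝ} (hw : w ≠ 0)
    (h : ∀ u, u ⬝ᵥ w = 0 → u ⬝ᵥ v = 0) : v = (v ⬝ᵥ w / w ⬝ᵥ w) • w := by
  set u := v - (v ⬝ᵥ w / w ⬝ᵥ w) • w
  have huw : u ⬝ᵥ w = 0 := by
    have := (dotProduct_self_pos hw).ne'
    simp only [u, sub_dotProduct, smul_dotProduct, smul_eq_mul]
    field_simp
    ring
  have huu : u ⬝ᵥ u = 0 := by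
    rw [dotProduct_sub, dotProduct_smul, h u huw, dotProduct_comm, huw, smul_zero, sub_zero]
  exact sub_eq_zero.1 (dotProduct_self_eq_zero.1 huu)

lemma add_dotProduct_add_self (x y : ι → ℝ) :
    (x + y) ⬝ᵥ (x + y) = x ⬝ᵥ x + 2 * x ⬝ᵥ y + y ⬝ᵥ y := by
  rw [add_dotProduct, dotProduct_add, dotProduct_add, dotProduct_comm y x]
  ring

lemma sub_dotProduct_sub_self (x y : ι → ℝ) :
    (x - y) ⬝ᵥ (x - y) = x ⬝ᵥ x - 2 * x ⬝ᵥ y + y ⬝ᵥ y := by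
  rw [sub_eq_add_neg, add_dotProduct_add_self, dotProduct_neg, neg_dotProduct, dotProduct_neg,
    neg_neg]
  ring

lemma exists_dotProduct_sub_self_eq_one_of_le_four [Nontrivial ι] {A A' : ι → ℝ}
    (h : (A' - A) ⬝ᵥ (A' - A) ≤ 4) :
    ∃ M, (M - A) ⬝ᵥ (M - A) = 1 ∧ (A' - M) ⬝ᵥ (A' - M) = 1 := by
  obtain ⟨v, hv, hvv⟩ := exists_dotProduct_eq_zero_dotProduct_self_eq (A' - A)
    (r := 1 - (A' - A) ⬝ᵥ (A' - A) / 4) (by linarith)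
  rw [dotProduct_comm] at hv
  refine ⟨(2 : ℝ)⁻¹ • (A + A') + v, ?_, ?_⟩
  · rw [show (2 : ℝ)⁻¹ • (A + A') + v - A = (2 : ℝ)⁻¹ • (A' - A) + v by module,
      add_dotProduct_add_self]
    simp only [smul_dotProduct, dotProduct_smul, hv, smul_eq_mul]
    linarith
  · rw [show A' - ((2 : ℝ)⁻¹ • (A + A') + v) = (2 : ℝ)⁻¹ • (A' - A) - v by module,
      sub_dotProduct_sub_self]
    simp only [smul_dotProduct, dotProduct_smul, hv, smul_eq_mul]
    linarith

lemma forall_of_forall_dotProduct_sub_self_le {P : (ι → ℝ) → Prop} {δ : ℝ} (hδ : 0 < δ)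
    (h0 : P 0) (hstep : ∀ A A', P A → (A' - A) ⬝ᵥ (A' - A) ≤ δ → P A') (A : ι → ℝ) : P A := by
  set m : ℕ := ⌈A ⬝ᵥ A / δ⌉₊ + 1
  have hm : (1 : ℝ) ≤ m := by simp [m]
  have hAm : A ⬝ᵥ A ≤ δ * m ^ 2 := by
    have := Nat.le_ceil (A ⬝ᵥ A / δ)
    rw [div_le_iff₀ hδ] at this
    have : (⌈A ⬝ᵥ A / δ⌉₊ : ℝ) ≤ m ^ 2 := by simp only [m]; push_cast; nlinarith
    nlinarith
  have hP : ∀ j : ℕ, P ((j / m : ℝ) • A) := by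
    intro j
    induction j with
    | zero => simpa using h0
    | succ j ih =>
      refine hstep _ _ ih ?_
      have e : ((↑(j + 1) : ℝ) / m) • A - ((j : ℝ) / m) • A = (m : ℝ)⁻¹ • A := by
        rw [← sub_smul]; congr 1; push_cast; ring
      rw [e, smul_dotProduct, dotProduct_smul, smul_eq_mul, smul_eq_mul, ← mul_assoc,
        ← sq, inv_pow, inv_mul_le_iff₀ (by positivity), mul_comm]
      exact hAm
  simpa [(by linarith : (0 : ℝ) < m).ne'] using hP m

-- With the first two conditions, the disjunction says that `(A - v) + i(1,…,1)` is at unit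
-- distance from `A + iB` but not from `A - iB`.
lemma exists_dotProduct_sub_one_eq_zero [Nontrivial ι] {B : ι → ℝ} (hB : B ≠ 0) {r : ℝ}
    (hr : 0 < r) : ∃ v, v ⬝ᵥ (B - 1) = 0 ∧ v ⬝ᵥ v = r ∧ (B ⬝ᵥ 1 ≠ 0 ∨ v ⬝ᵥ B ≠ 0) := by
  by_cases hB1 : B ⬝ᵥ 1 = 0
  · have h1 : (1 : ι → ℝ) ⬝ᵥ 1 ≠ 0 := by simp [Fintype.card_ne_zero]
    have hw : B - 1 ≠ 0 := fun h => h1 (by rwa [sub_eq_zero.1 h] at hB1)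
    obtain ⟨u, hu, huB⟩ : ∃ u, u ⬝ᵥ (B - 1) = 0 ∧ u ⬝ᵥ B ≠ 0 := by
      by_contra! h
      obtain ⟨c, hc⟩ : ∃ c : ℝ, B = c • (B - 1) := ⟨_, eq_smul_of_forall_dotProduct_eq_zero hw h⟩
      have hc1 := congrArg (· ⬝ᵥ 1) hc
      simp only [smul_dotProduct, sub_dotProduct, hB1, smul_eq_mul, zero_sub, mul_neg,
        zero_eq_neg, mul_eq_zero, h1, or_false] at hc1
      exact hB (by rw [hc, hc1, zero_smul])
    have hu0 : u ≠ 0 := by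
      rintro rfl
      simp at huB
    obtain ⟨t, ht⟩ := exists_smul_dotProduct_self_eq hu0 hr.le
    have ht0 : t ≠ 0 := by
      rintro rfl
      simp only [zero_smul, dotProduct_zero] at ht
      linarith
    exact ⟨t • u, by rw [smul_dotProduct, hu, smul_zero], ht, .inr (by simp [ht0, huB])⟩
  · obtain ⟨v, hv, hvv⟩ := exists_dotProduct_eq_zero_dotProduct_self_eq (B - 1) hr.le
    exact ⟨v, hv, hvv, .inl hB1⟩

end Geometry

namespace UnitDistance

variable {n : ℕ}

def ofReIm (A B : Fin n → ℝ) : Fin n → ℂ := fun i => ⟨A i, B i⟩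

lemma exists_eq_ofReIm (X : Fin n → ℂ) : ∃ A B, X = ofReIm A B :=
  ⟨fun i => (X i).re, fun i => (X i).im, rfl⟩

lemma conj_ofReIm (A B : Fin n → ℝ) :
    (fun i => starRingEnd ℂ (ofReIm A B i)) = ofReIm A (-B) := by
  funext i
  apply Complex.ext <;> simp [ofReIm]

lemma phi_conj (X Y : Fin n → ℂ) :
    phi n (fun i => starRingEnd ℂ (X i)) (fun i => starRingEnd ℂ (Y i)) =
      starRingEnd ℂ (phi n X Y) := by
  simp only [phi, map_sum, map_pow, map_sub]

lemma phi_ofReIm_eq_one_iff (A B A' B' : Fin n → ℝ) :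
    phi n (ofReIm A B) (ofReIm A' B') = 1 ↔
      (A - A') ⬝ᵥ (A - A') - (B - B') ⬝ᵥ (B - B') = 1 ∧ (A - A') ⬝ᵥ (B - B') = 0 := by
  have hre : (phi n (ofReIm A B) (ofReIm A' B')).re =
      (A - A') ⬝ᵥ (A - A') - (B - B') ⬝ᵥ (B - B') := by
    simp [phi, ofReIm, dotProduct, Complex.re_sum, sq, Finset.sum_sub_distrib]
  have him : (phi n (ofReIm A B) (ofReIm A' B')).im = 2 * (A - A') ⬝ᵥ (B - B') := by
    simp only [phi, ofReIm, dotProduct, Complex.im_sum, sq, Complex.mul_im, Complex.sub_re,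
      Complex.sub_im, Pi.sub_apply, Finset.mul_sum]
    exact Finset.sum_congr rfl fun i _ => by ring
  rw [Complex.ext_iff, hre, him]
  simp

def PreservesUnitDist (f : (Fin n → ℂ) → (Fin n → ℂ)) : Prop :=
  ∀ X Y, phi n X Y = 1 ^ 2 → phi n (f X) (f Y) = 1 ^ 2

namespace PreservesUnitDist

variable {f : (Fin n → ℂ) → (Fin n → ℂ)}

lemma phi_eq_one (hf : PreservesUnitDist f) {X Y : Fin n → ℂ} (h : phi n X Y = 1) :
    phi n (f X) (f Y) = 1 := by
  simpa using hf X Y (by simpa using h)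

lemma conj (hf : PreservesUnitDist f) :
    PreservesUnitDist fun X i => starRingEnd ℂ (f X i) := by
  intro X Y h
  rw [phi_conj, hf X Y h, map_pow, map_one]

/-- `A ± w` are real points at unit distance from `A + iB`, hence also from `f(A + iB) = A' + iB'`;
adding and subtracting the two resulting relations gives these. -/
lemma dotProduct_relations (hf : PreservesUnitDist f)
    (hreal : ∀ A, f (ofReIm A 0) = ofReIm A 0) {A B A' B' w : Fin n → ℝ}
    (hX : f (ofReIm A B) = ofReIm A' B') (hw : w ⬝ᵥ B = 0) (hww : w ⬝ᵥ w = 1 + B ⬝ᵥ B) :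
    w ⬝ᵥ B' = 0 ∧ (A' - A) ⬝ᵥ w = 0 ∧ (A' - A) ⬝ᵥ B' = 0 ∧
      (A' - A) ⬝ᵥ (A' - A) + B ⬝ᵥ B = B' ⬝ᵥ B' := by
  have key : ∀ s : ℝ, s ^ 2 = 1 →
      (A' - A) ⬝ᵥ (A' - A) - 2 * (s * (A' - A) ⬝ᵥ w) + s ^ 2 * w ⬝ᵥ w - B' ⬝ᵥ B' = 1 ∧
        (A' - A) ⬝ᵥ B' - s * w ⬝ᵥ B' = 0 := by
    intro s hs
    have h := hf.phi_eq_one (X := ofReIm A B) (Y := ofReIm (A + s • w) 0) <| by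
      simp only [phi_ofReIm_eq_one_iff, sub_add_cancel_left, sub_zero, neg_dotProduct,
        dotProduct_neg, smul_dotProduct, dotProduct_smul, hw, smul_eq_mul, hww]
      constructor
      · linear_combination (1 + B ⬝ᵥ B) * hs
      · simp
    rw [hX, hreal, phi_ofReIm_eq_one_iff, sub_zero, sub_add_eq_sub_sub, sub_dotProduct_sub_self,
      sub_dotProduct (A' - A)] at h
    simpa only [dotProduct_smul, smul_dotProduct, smul_eq_mul, ← mul_assoc, ← sq] using h
  obtain ⟨h1, h2⟩ := key 1 (one_pow 2)
  obtain ⟨h3, h4⟩ := key (-1) (by norm_num)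
  refine ⟨by linarith, by linarith, by linarith, by linarith⟩

lemma dotProduct_eq_zero_of_dotProduct_eq_zero (hf : PreservesUnitDist f)
    (hreal : ∀ A, f (ofReIm A 0) = ofReIm A 0) {A B A' B' v : Fin n → ℝ}
    (hX : f (ofReIm A B) = ofReIm A' B') (hv : v ⬝ᵥ B = 0) :
    v ⬝ᵥ B' = 0 ∧ v ⬝ᵥ (A' - A) = 0 := by
  rcases eq_or_ne v 0 with rfl | hv0
  · simp
  have hr : 0 < 1 + B ⬝ᵥ B := by linarith [dotProduct_self_nonneg B]
  obtain ⟨t, ht⟩ := exists_smul_dotProduct_self_eq hv0 hr.le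
  have ht0 : t ≠ 0 := by
    rintro rfl
    simp only [zero_smul, dotProduct_zero] at ht
    linarith
  obtain ⟨h1, h2, -, -⟩ := hf.dotProduct_relations hreal hX
    (by rw [smul_dotProduct, hv, smul_zero]) ht
  simp only [smul_dotProduct, dotProduct_smul, smul_eq_mul, mul_eq_zero, ht0, false_or] at h1 h2
  exact ⟨h1, by rwa [dotProduct_comm]⟩

lemma map_ofReIm_eq_or_eq_conj [Nontrivial (Fin n)] (hf : PreservesUnitDist f)
    (hreal : ∀ A, f (ofReIm A 0) = ofReIm A 0) {A B : Fin n → ℝ} (hB : B ≠ 0) :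
    f (ofReIm A B) = ofReIm A B ∨ f (ofReIm A B) = ofReIm A (-B) := by
  obtain ⟨A', B', hX⟩ := exists_eq_ofReIm (f (ofReIm A B))
  obtain ⟨c, hc⟩ : ∃ c : ℝ, B' = c • B := ⟨_, eq_smul_of_forall_dotProduct_eq_zero hB
    fun v hv => (hf.dotProduct_eq_zero_of_dotProduct_eq_zero hreal hX hv).1⟩
  obtain ⟨d, hd⟩ : ∃ d : ℝ, A' - A = d • B := ⟨_, eq_smul_of_forall_dotProduct_eq_zero hB
    fun v hv => (hf.dotProduct_eq_zero_of_dotProduct_eq_zero hreal hX hv).2⟩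
  obtain ⟨w, hw, hww⟩ := exists_dotProduct_eq_zero_dotProduct_self_eq B (r := 1 + B ⬝ᵥ B)
    (add_nonneg zero_le_one (dotProduct_self_nonneg B))
  obtain ⟨-, -, h1, h2⟩ := hf.dotProduct_relations hreal hX hw hww
  rw [hc, hd] at h1 h2
  simp only [smul_dotProduct, dotProduct_smul, smul_eq_mul] at h1 h2
  have hBB := (dotProduct_self_pos hB).ne'
  have hdc : d * c = 0 :=
    (mul_eq_zero.1 (by linear_combination h1 : d * c * B ⬝ᵥ B = 0)).resolve_right hBB
  have hcd : c ^ 2 = d ^ 2 + 1 := mul_right_cancel₀ hBB (by linear_combination -h2)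
  have hd0 : d = 0 := by nlinarith
  have hA : A' = A := by rwa [hd0, zero_smul, sub_eq_zero] at hd
  rcases eq_or_eq_neg_of_sq_eq_sq c 1 (by rw [hcd, hd0]; norm_num) with rfl | rfl
  · exact .inl (by rw [hX, hA, hc, one_smul])
  · exact .inr (by rw [hX, hA, hc, neg_one_smul])

lemma map_ofReIm_eq_self_of_phi [Nontrivial (Fin n)] (hf : PreservesUnitDist f)
    (hreal : ∀ A, f (ofReIm A 0) = ofReIm A 0) {Z : Fin n → ℂ} (hZ : f Z = Z) {A B : Fin n → ℝ}
    (h1 : phi n (ofReIm A B) Z = 1) (h2 : phi n (ofReIm A (-B)) Z ≠ 1) :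
    f (ofReIm A B) = ofReIm A B := by
  rcases eq_or_ne B 0 with rfl | hB
  · exact hreal A
  refine (hf.map_ofReIm_eq_or_eq_conj hreal hB).resolve_right fun hconj => h2 ?_
  simpa [hconj, hZ] using hf.phi_eq_one h1

lemma map_ofReIm_one [Nontrivial (Fin n)] (hf : PreservesUnitDist f)
    (hreal : ∀ A, f (ofReIm A 0) = ofReIm A 0) (hI : f (ofReIm 0 1) = ofReIm 0 1)
    (A : Fin n → ℝ) : f (ofReIm A 1) = ofReIm A 1 := by
  have step : ∀ A A', f (ofReIm A 1) = ofReIm A 1 → (A' - A) ⬝ᵥ (A' - A) = 1 →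
      f (ofReIm A' 1) = ofReIm A' 1 := by
    intro A A' hA h
    refine hf.map_ofReIm_eq_self_of_phi hreal hA ?_ ?_
    · simp [phi_ofReIm_eq_one_iff, h]
    · rw [Ne, phi_ofReIm_eq_one_iff]
      rintro ⟨h', -⟩
      have h0 : (-1 - 1 : Fin n → ℝ) = 0 := dotProduct_self_eq_zero.1 (by linarith)
      have h2 := congrFun h0 (Classical.arbitrary _)
      norm_num at h2
  refine forall_of_forall_dotProduct_sub_self_le (P := fun A => f (ofReIm A 1) = ofReIm A 1)
    four_pos hI (fun A A' hA h => ?_) A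
  obtain ⟨M, h1, h2⟩ := exists_dotProduct_sub_self_eq_one_of_le_four h
  exact step M A' (step A M hA h1) h2

lemma eq_self_of_forall_map_ofReIm_one [Nontrivial (Fin n)] (hf : PreservesUnitDist f)
    (hreal : ∀ A, f (ofReIm A 0) = ofReIm A 0) (hslice : ∀ C, f (ofReIm C 1) = ofReIm C 1)
    (X : Fin n → ℂ) : f X = X := by
  obtain ⟨A, B, rfl⟩ := exists_eq_ofReIm X
  rcases eq_or_ne B 0 with rfl | hB
  · exact hreal A
  obtain ⟨v, hv, hvv, hne⟩ := exists_dotProduct_sub_one_eq_zero hB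
    (r := 1 + (B - 1) ⬝ᵥ (B - 1)) (by linarith [dotProduct_self_nonneg (B - 1)])
  refine hf.map_ofReIm_eq_self_of_phi hreal (hslice (A - v)) ?_ ?_
  · rw [phi_ofReIm_eq_one_iff, sub_sub_cancel, hvv]
    exact ⟨by ring, hv⟩
  · rw [Ne, phi_ofReIm_eq_one_iff, sub_sub_cancel]
    rintro ⟨h1, h2⟩
    simp only [sub_dotProduct, dotProduct_sub, neg_dotProduct, dotProduct_neg,
      dotProduct_comm 1 B] at h1 h2 hv hvv
    rcases hne with hne | hne <;> apply hne <;> linarith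

lemma eq_self_of_map_ofReIm_zero_one [Nontrivial (Fin n)] (hf : PreservesUnitDist f)
    (hreal : ∀ A, f (ofReIm A 0) = ofReIm A 0) (hI : f (ofReIm 0 1) = ofReIm 0 1)
    (X : Fin n → ℂ) : f X = X :=
  hf.eq_self_of_forall_map_ofReIm_one hreal (hf.map_ofReIm_one hreal hI) X

end PreservesUnitDist

end UnitDistance

open UnitDistance in
theorem stmt_7_general (n : ℕ) (hn : 2 ≤ n) (f : (Fin n → ℂ) → (Fin n → ℂ))
    (hf : ∀ X Y : Fin n → ℂ, phi n X Y = 1 ^ 2 → phi n (f X) (f Y) = 1 ^ 2)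
    (hreal : ∀ X : Fin n → ℂ, (∀ i, (X i).im = 0) → f X = X)
    (X : Fin n → ℂ) :
    ((f (fun _ => Complex.I) = fun _ => Complex.I) → f X = X) ∧
    ((f (fun _ => Complex.I) = fun _ => -Complex.I) →
      f X = fun i => (starRingEnd ℂ) (X i)) := by
  have : Nontrivial (Fin n) := Fin.nontrivial_iff_two_le.2 hn
  have hI : (fun _ => Complex.I : Fin n → ℂ) = ofReIm 0 1 := by
    funext i
    apply Complex.ext <;> simp [ofReIm]
  have hreal' : ∀ A, f (ofReIm A 0) = ofReIm A 0 := fun A => hreal _ fun _ => rfl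
  refine ⟨fun h => PreservesUnitDist.eq_self_of_map_ofReIm_zero_one hf hreal' (hI ▸ h) X,
    fun h => ?_⟩
  have hconj := (PreservesUnitDist.conj hf).eq_self_of_map_ofReIm_zero_one
    (fun A => by rw [hreal', conj_ofReIm, neg_zero]) (by rw [← hI, h]; funext i; simp) X
  funext i
  simpa using congrArg (starRingEnd ℂ) (congrFun hconj i)

/-- If n ≥ 2, f : ℂⁿ → ℂⁿ preserves unit distance and is the identity on ℝⁿ,
then for each X ∈ ℂⁿ \ ℝⁿ: f((i,...,i)) = (i,...,i) implies f(X) = X, and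
f((i,...,i)) = (−i,...,−i) implies f(X) = (τ,...,τ)(X). -/
theorem stmt_7 (n : ℕ) (hn : 2 ≤ n) (f : (Fin n → ℂ) → (Fin n → ℂ))
    (hf : ∀ X Y : Fin n → ℂ, phi n X Y = 1 ^ 2 → phi n (f X) (f Y) = 1 ^ 2)
    (hreal : ∀ X : Fin n → ℂ, (∀ i, (X i).im = 0) → f X = X)
    (X : Fin n → ℂ) (hX : ¬ ∀ i, (X i).im = 0) :
    ((f (fun _ => Complex.I) = fun _ => Complex.I) → f X = X) ∧
    ((f (fun _ => Complex.I) = fun _ => -Complex.I) →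
      f X = fun i => (starRingEnd ℂ) (X i)) :=
  stmt_7_general n hn f hf hreal X
end

section
/- Let f : ℂ → ℂ be such that for all x, y ∈ ℂ, if (x − y)² ∈ ℝ then (x − y)² = (f(x) − f(y))². Then there exist an affine map I : ℂ → ℂ with orthogonal linear part and ρ ∈ {id_ℂ, τ} such that f = I ∘ ρ. -/
/-- Let f : ℂ → ℂ be such that for all x, y ∈ ℂ, (x − y)² ∈ ℝ implies
(x − y)² = (f(x) − f(y))². Then f = I ∘ ρ for some affine map I : ℂ → ℂ with
orthogonal linear part and ρ ∈ {id, complex conjugation}. -/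
theorem stmt_11 (f : ℂ → ℂ)
    (hf : ∀ x y : ℂ, (x - y) ^ 2 ∈ Set.range ((↑) : ℝ → ℂ) →
      (x - y) ^ 2 = (f x - f y) ^ 2) :
    ∃ (I : ℂ →ᵃ[ℂ] ℂ) (ρ : ℂ → ℂ),
      (∀ x y : ℂ, (I x - I y) ^ 2 = (x - y) ^ 2) ∧
      (ρ = id ∨ ρ = fun z => (starRingEnd ℂ) z) ∧
      (∀ x : ℂ, f x = I (ρ x)) := by
  -- from a² = b² conclude b = ±a
  have sq_cases : ∀ a b : ℂ, a ^ 2 = b ^ 2 → b = a ∨ b = -a := by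
    intro a b h
    have h2 : (b - a) * (b + a) = 0 := by linear_combination -h
    rcases mul_eq_zero.mp h2 with h' | h'
    · exact Or.inl (sub_eq_zero.mp h')
    · exact Or.inr (eq_neg_of_add_eq_zero_left h')
  have hd : ∀ x y : ℂ, (x - y) ^ 2 ∈ Set.range ((↑) : ℝ → ℂ) →
      f x - f y = x - y ∨ f x - f y = -(x - y) := fun x y h => sq_cases _ _ (hf x y h)
  have hR : ∀ x y : ℂ, (∃ t : ℝ, x - y = (t : ℂ)) →
      f x - f y = x - y ∨ f x - f y = -(x - y) := by
    rintro x y ⟨t, ht⟩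
    exact hd x y ⟨t ^ 2, by rw [ht]; push_cast; ring⟩
  have hI : ∀ x y : ℂ, (∃ t : ℝ, x - y = (t : ℂ) * Complex.I) →
      f x - f y = x - y ∨ f x - f y = -(x - y) := by
    rintro x y ⟨t, ht⟩
    refine hd x y ⟨-(t ^ 2), ?_⟩
    rw [ht, mul_pow, Complex.I_sq]; push_cast; ring
  set u : ℂ := f 1 - f 0 with hu_def
  have hu : u = 1 ∨ u = -1 := by
    have := hR 1 0 ⟨1, by norm_num⟩
    simpa using this
  have hu2 : u * u = 1 := by rcases hu with h | h <;> rw [h] <;> norm_num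
  set g : ℂ → ℂ := fun x => u * (f x - f 0) with hg_def
  have g0 : g 0 = 0 := by simp [hg_def]
  have g1 : g 1 = 1 := by
    show u * (f 1 - f 0) = 1
    rw [← hu_def]; exact hu2
  have hmul : ∀ x y : ℂ, (f x - f y = x - y ∨ f x - f y = -(x - y)) →
      g x - g y = x - y ∨ g x - g y = -(x - y) := by
    intro x y h
    have hgd : g x - g y = u * (f x - f y) := by simp only [hg_def]; ring
    rcases hu with h1 | h1 <;> rcases h with h2 | h2 <;> rw [hgd, h2, h1]
    · left; ring
    · right; ring
    · right; ring
    · left; ring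
  have gR : ∀ x y : ℂ, (∃ t : ℝ, x - y = (t : ℂ)) →
      g x - g y = x - y ∨ g x - g y = -(x - y) := fun x y h => hmul x y (hR x y h)
  have gI : ∀ x y : ℂ, (∃ t : ℝ, x - y = (t : ℂ) * Complex.I) →
      g x - g y = x - y ∨ g x - g y = -(x - y) := fun x y h => hmul x y (hI x y h)
  -- g is the identity on the real axis
  have greal : ∀ t : ℝ, g t = t := by
    intro t
    have h1 := gR t 0 ⟨t, by simp⟩
    have h2 := gR t 1 ⟨t - 1, by push_cast; ring⟩
    rw [g0] at h1
    rw [g1] at h2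
    rcases h1 with h1 | h1
    · linear_combination h1
    rcases h2 with h2 | h2
    · linear_combination h2
    exfalso
    have : (2 : ℂ) = 0 := by linear_combination h1 - h2
    norm_num at this
  have hvI := gI Complex.I 0 ⟨1, by simp⟩
  rw [g0] at hvI
  have hfx : ∀ x : ℂ, f x = u * g x + f 0 := by
    intro x
    simp only [hg_def]
    rw [← mul_assoc, hu2]; ring
  have main : (∀ x : ℂ, g x = x) ∨ (∀ x : ℂ, g x = (starRingEnd ℂ) x) := by
    rcases hvI with hv | hv
    · -- g I = I : g = id
      left
      have gim : ∀ t : ℝ, g ((t : ℂ) * Complex.I) = (t : ℂ) * Complex.I := by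
        intro t
        have h1 := gI ((t : ℂ) * Complex.I) 0 ⟨t, by simp⟩
        have h2 := gI ((t : ℂ) * Complex.I) Complex.I ⟨t - 1, by push_cast; ring⟩
        rw [g0] at h1
        rw [show g Complex.I = Complex.I by linear_combination hv] at h2
        rcases h1 with h1 | h1
        · linear_combination h1
        rcases h2 with h2 | h2
        · linear_combination h2
        exfalso
        have : (2 : ℂ) * Complex.I = 0 := by linear_combination h1 - h2
        simp [Complex.I_ne_zero] at this
      intro x
      have h1 := gR x ((x.im : ℂ) * Complex.I) ⟨x.re, by simp [Complex.ext_iff]⟩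
      have h2 := gI x ((x.re : ℂ)) ⟨x.im, by simp [Complex.ext_iff]⟩
      rw [gim x.im] at h1
      rw [greal x.re] at h2
      rcases h1 with h1 | h1
      · linear_combination h1
      rcases h2 with h2 | h2
      · linear_combination h2
      -- both negative: x = 0
      have hre : (x.re : ℂ) - (x.im : ℂ) * Complex.I = 0 := by
        linear_combination (h1 - h2) / 2
      have hx0 : x = 0 := by
        have h3 : x.re = 0 ∧ x.im = 0 := by
          constructor
          · have := congrArg Complex.re hre; simpa using this
          · have := congrArg Complex.im hre; simpa using this
        exact Complex.ext h3.1 h3.2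
      rw [hx0]; exact g0
    · -- g I = -I : g = conj
      right
      have gim : ∀ t : ℝ, g ((t : ℂ) * Complex.I) = -((t : ℂ) * Complex.I) := by
        intro t
        have h1 := gI ((t : ℂ) * Complex.I) 0 ⟨t, by simp⟩
        have h2 := gI ((t : ℂ) * Complex.I) Complex.I ⟨t - 1, by push_cast; ring⟩
        rw [g0] at h1
        rw [show g Complex.I = -Complex.I by linear_combination hv] at h2
        rcases h1 with h1 | h1
        swap
        · linear_combination h1
        rcases h2 with h2 | h2
        swap
        · linear_combination h2
        exfalso
        have : (2 : ℂ) * Complex.I = 0 := by linear_combination h2 - h1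
        simp [Complex.I_ne_zero] at this
      intro x
      have hconj : (starRingEnd ℂ) x = (x.re : ℂ) - (x.im : ℂ) * Complex.I := by
        simp [Complex.ext_iff]
      have hxs : x = (x.re : ℂ) + (x.im : ℂ) * Complex.I := (Complex.re_add_im x).symm
      have h1 := gR x ((x.im : ℂ) * Complex.I) ⟨x.re, by simp [Complex.ext_iff]⟩
      have h2 := gI x ((x.re : ℂ)) ⟨x.im, by simp [Complex.ext_iff]⟩
      rw [gim x.im] at h1
      rw [greal x.re] at h2
      rw [hconj]
      rcases h1 with h1 | h1
      · -- g x = x - 2 im I = conj x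
        linear_combination h1 + hxs
      rcases h2 with h2 | h2
      · -- g x = x and g x = -x ⇒ x = 0
        have hx0 : x = 0 := by linear_combination (h1 - h2) / 2
        rw [hx0]
        simpa using g0
      · -- both negative: re = 0, g x = -x = conj x
        have hre : (x.re : ℂ) = 0 := by linear_combination (h1 - h2) / 2
        linear_combination h1 - hxs - 2 * hre
  rcases main with hm | hm
  · refine ⟨{ toFun := fun z => u * z + f 0,
              linear := u • LinearMap.id,
              map_vadd' := by
                intro p v
                simp only [LinearMap.smul_apply, LinearMap.id_coe, id_eq, smul_eq_mul,
                  vadd_eq_add]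
                ring }, id, ?_, Or.inl rfl, ?_⟩
    · intro x y
      show (u * x + f 0 - (u * y + f 0)) ^ 2 = (x - y) ^ 2
      linear_combination (x - y) ^ 2 * hu2
    · intro x
      show f x = u * (id x) + f 0
      rw [hfx x, hm x]; rfl
  · refine ⟨{ toFun := fun z => u * z + f 0,
              linear := u • LinearMap.id,
              map_vadd' := by
                intro p v
                simp only [LinearMap.smul_apply, LinearMap.id_coe, id_eq, smul_eq_mul,
                  vadd_eq_add]
                ring }, fun z => (starRingEnd ℂ) z, ?_, Or.inr rfl, ?_⟩
    · intro x y
      show (u * x + f 0 - (u * y + f 0)) ^ 2 = (x - y) ^ 2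
      linear_combination (x - y) ^ 2 * hu2
    · intro x
      show f x = u * ((starRingEnd ℂ) x) + f 0
      rw [hfx x, hm x]
end

section
/- For each n ≥ 1, D(ℝⁿ,ℂⁿ) ⊆ D(ℂⁿ,ℂⁿ). -/
/-- D(ℝⁿ,ℂⁿ): the set of all real d > 0 such that for all X, Y ∈ ℝⁿ ⊆ ℂⁿ with
φ_n(X,Y) = d² there is a finite set S_XY with {X,Y} ⊆ S_XY ⊆ ℝⁿ such that every
map from S_XY to ℂⁿ preserving unit distance on S_XY preserves the distance
between X and Y. -/
def DRC (n : ℕ) : Set ℝ :=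
  {d | 0 < d ∧ ∀ X Y : Fin n → ℂ, (∀ i, (X i).im = 0) → (∀ i, (Y i).im = 0) →
    phi n X Y = (d : ℂ) ^ 2 →
    ∃ S : Finset (Fin n → ℂ), X ∈ S ∧ Y ∈ S ∧
      (∀ P ∈ S, ∀ i, (P i).im = 0) ∧
      ∀ f : (Fin n → ℂ) → (Fin n → ℂ),
        (∀ P ∈ S, ∀ Q ∈ S, phi n P Q = 1 → phi n (f P) (f Q) = 1) →
        phi n (f X) (f Y) = (d : ℂ) ^ 2}

/-- D(ℂⁿ,ℂⁿ): the set of all real d > 0 such that for all X, Y ∈ ℂⁿ with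
φ_n(X,Y) = d² there is a finite set S_XY with {X,Y} ⊆ S_XY ⊆ ℂⁿ such that every
map from S_XY to ℂⁿ preserving unit distance on S_XY preserves the distance
between X and Y. -/
def DCC (n : ℕ) : Set ℝ :=
  {d | 0 < d ∧ ∀ X Y : Fin n → ℂ, phi n X Y = (d : ℂ) ^ 2 →
    ∃ S : Finset (Fin n → ℂ), X ∈ S ∧ Y ∈ S ∧
      ∀ f : (Fin n → ℂ) → (Fin n → ℂ),
        (∀ P ∈ S, ∀ Q ∈ S, phi n P Q = 1 → phi n (f P) (f Q) = 1) →
        phi n (f X) (f Y) = (d : ℂ) ^ 2}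

/-!
A complex pair `X, Y` with `φ(X, Y) = d²` is the image of the real pair `0, d • e₀` under an
affine map of `ℂⁿ` preserving `φ`: a translation composed with a complex reflection, possibly
followed by `-1`, as in Witt's extension theorem. Pushing a rigid real set for `0, d • e₀`
forward along this map gives a rigid set for `X, Y`, because a map preserving unit distance on
the image, precomposed with the `φ`-isometry, preserves unit distance on the real set.
-/

section Reflection

variable {K ι : Type*} [Field K] [Fintype ι]

def dotReflection (u : ι → K) : (ι → K) →ₗ[K] ι → K where
  toFun x := x - (2 * (x ⬝ᵥ u) / (u ⬝ᵥ u)) • u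
  map_add' x y := by
    simp only [add_dotProduct, mul_add, add_div, add_smul]
    abel
  map_smul' c x := by
    simp only [smul_dotProduct, smul_eq_mul, RingHom.id_apply, smul_sub, smul_smul]
    congr 2
    ring

theorem dotReflection_apply (u x : ι → K) :
    dotReflection u x = x - (2 * (x ⬝ᵥ u) / (u ⬝ᵥ u)) • u :=
  rfl

theorem dotReflection_dotProduct {u : ι → K} (hu : u ⬝ᵥ u ≠ 0) (x y : ι → K) :
    dotReflection u x ⬝ᵥ dotReflection u y = x ⬝ᵥ y := by
  simp only [dotReflection_apply, sub_dotProduct, dotProduct_sub, smul_dotProduct,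
    dotProduct_smul, smul_eq_mul, dotProduct_comm u y]
  field_simp
  ring

theorem dotReflection_sub_apply {a b : ι → K} (hab : a ⬝ᵥ a = b ⬝ᵥ b)
    (h : (a - b) ⬝ᵥ (a - b) ≠ 0) : dotReflection (a - b) a = b := by
  have hcoef : 2 * (a ⬝ᵥ (a - b)) / ((a - b) ⬝ᵥ (a - b)) = 1 := by
    rw [div_eq_one_iff_eq h]
    simp only [sub_dotProduct, dotProduct_sub, dotProduct_comm b a, hab]
    ring
  rw [dotReflection_apply, hcoef, one_smul, sub_sub_cancel]

theorem dotReflection_add_apply {a b : ι → K} (hab : a ⬝ᵥ a = b ⬝ᵥ b)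
    (h : (a + b) ⬝ᵥ (a + b) ≠ 0) : dotReflection (a + b) a = -b := by
  have hcoef : 2 * (a ⬝ᵥ (a + b)) / ((a + b) ⬝ᵥ (a + b)) = 1 := by
    rw [div_eq_one_iff_eq h]
    simp only [add_dotProduct, dotProduct_add, dotProduct_comm b a, hab]
    ring
  rw [dotReflection_apply, hcoef, one_smul, sub_add_cancel_left]

theorem exists_dotProduct_isometry_apply_eq (h2 : (2 : K) ≠ 0) {a b : ι → K}
    (hab : a ⬝ᵥ a = b ⬝ᵥ b) (ha : a ⬝ᵥ a ≠ 0) :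
    ∃ T : (ι → K) →ₗ[K] ι → K, T a = b ∧ ∀ x y, T x ⬝ᵥ T y = x ⬝ᵥ y := by
  by_cases hsub : (a - b) ⬝ᵥ (a - b) = 0
  · have hadd : (a + b) ⬝ᵥ (a + b) ≠ 0 := by
      have : (a + b) ⬝ᵥ (a + b) = 4 * (a ⬝ᵥ a) - (a - b) ⬝ᵥ (a - b) := by
        simp only [add_dotProduct, dotProduct_add, sub_dotProduct, dotProduct_sub, hab]
        ring
      rw [this, hsub, sub_zero]
      exact mul_ne_zero (by simpa [show (4 : K) = 2 * 2 by norm_num] using h2) ha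
    refine ⟨-dotReflection (a + b), by simp [dotReflection_add_apply hab hadd], fun x y => ?_⟩
    simp only [LinearMap.neg_apply, neg_dotProduct, dotProduct_neg, neg_neg,
      dotReflection_dotProduct hadd]
  · exact ⟨dotReflection (a - b), dotReflection_sub_apply hab hsub, dotReflection_dotProduct hsub⟩

end Reflection

theorem phi_eq_dotProduct (n : ℕ) (X Y : Fin n → ℂ) : phi n X Y = (X - Y) ⬝ᵥ (X - Y) := by
  simp only [phi, dotProduct, Pi.sub_apply, sq]

theorem exists_phi_isometry {n : ℕ} {A B X Y : Fin n → ℂ} (h : phi n A B = phi n X Y)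
    (h0 : phi n A B ≠ 0) :
    ∃ g : (Fin n → ℂ) → Fin n → ℂ, g A = X ∧ g B = Y ∧ ∀ P Q, phi n (g P) (g Q) = phi n P Q := by
  rw [phi_eq_dotProduct, phi_eq_dotProduct] at h
  rw [phi_eq_dotProduct] at h0
  obtain ⟨T, hT, hTiso⟩ := exists_dotProduct_isometry_apply_eq two_ne_zero h h0
  refine ⟨fun P => Y + T (P - B), by simp [hT], by simp, fun P Q => ?_⟩
  rw [phi_eq_dotProduct, phi_eq_dotProduct, add_sub_add_left_eq_sub, ← map_sub,
    sub_sub_sub_cancel_right, hTiso]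

/-- For each n ≥ 1, D(ℝⁿ,ℂⁿ) ⊆ D(ℂⁿ,ℂⁿ). -/
theorem stmt_12 (n : ℕ) (hn : 1 ≤ n) : DRC n ⊆ DCC n := by
  rintro d ⟨hd, hrigid⟩
  refine ⟨hd, fun X Y hXY => ?_⟩
  set e : Fin n → ℂ := Pi.single ⟨0, hn⟩ (d : ℂ)
  have he : phi n 0 e = (d : ℂ) ^ 2 := by
    simp [phi, e, Pi.single_apply]
  have he_real : ∀ i, (e i).im = 0 := fun i => by
    rcases eq_or_ne i ⟨0, hn⟩ with rfl | hi <;> simp [e, *]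
  obtain ⟨S, h0S, heS, -, hS⟩ := hrigid 0 e (fun _ => rfl) he_real he
  obtain ⟨g, hg0, hge, hg⟩ := 
    exists_phi_isometry (he.trans hXY.symm) (by rw [he]; simpa using hd.ne')
  subst hg0 hge
  refine ⟨S.image g, Finset.mem_image_of_mem g h0S, Finset.mem_image_of_mem g heS, fun f hf => ?_⟩
  exact hS (f ∘ g) fun P hP Q hQ hPQ =>
    hf _ (Finset.mem_image_of_mem g hP) _ (Finset.mem_image_of_mem g hQ) ((hg P Q).trans hPQ)
end

section
/- If n ≥ 1 and f : ℝⁿ → ℂⁿ preserves all positive distances (i.e., for every real d > 0 and all X, Y ∈ ℝⁿ with φ_n(X,Y) = d² one has φ_n(f(X), f(Y)) = d²), then there exists an affine map I : ℂⁿ → ℂⁿ with orthogonal linear part such that I(X) = f(X) for every X ∈ ℝⁿ. -/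
open Matrix


/-- If n ≥ 1 and f : ℝⁿ → ℂⁿ preserves all positive distances, then there is an
affine map I : ℂⁿ → ℂⁿ with orthogonal linear part extending f. -/
theorem stmt_15 (n : ℕ) (hn : 1 ≤ n) (f : (Fin n → ℝ) → (Fin n → ℂ))
    (hf : ∀ d : ℝ, 0 < d → ∀ X Y : Fin n → ℝ,
      phi n (fun i => (X i : ℂ)) (fun i => (Y i : ℂ)) = (d : ℂ) ^ 2 →
      phi n (f X) (f Y) = (d : ℂ) ^ 2) :
    ∃ I : (Fin n → ℂ) →ᵃ[ℂ] (Fin n → ℂ),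
      (∀ P Q : Fin n → ℂ, phi n (I P) (I Q) = phi n P Q) ∧
      (∀ X : Fin n → ℝ, I (fun i => (X i : ℂ)) = f X) := by
  classical
  set B : (Fin n → ℂ) → (Fin n → ℂ) → ℂ := fun u v => ∑ i, u i * v i with hBdef
  -- polarization identity
  have pol : ∀ a b c : Fin n → ℂ,
      B (a - c) (b - c) * 2 = phi n a c + phi n b c - phi n a b := by
    intro a b c
    simp only [hBdef, phi, Finset.sum_mul, ← Finset.sum_add_distrib, ← Finset.sum_sub_distrib]
    apply Finset.sum_congr rfl
    intro i _
    simp only [Pi.sub_apply]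
    ring
  -- f preserves phi on real points
  have hpres : ∀ X Y : Fin n → ℝ,
      phi n (f X) (f Y) = phi n (fun i => (X i : ℂ)) (fun i => (Y i : ℂ)) := by
    intro X Y
    by_cases h : X = Y
    · subst h; simp [phi]
    · have hpos : 0 < ∑ i, (X i - Y i) ^ 2 := by
        apply Finset.sum_pos' (fun i _ => sq_nonneg _)
        obtain ⟨i, hi⟩ := Function.ne_iff.mp h
        refine ⟨i, Finset.mem_univ i, ?_⟩
        have : X i - Y i ≠ 0 := sub_ne_zero.mpr hi
        positivity
      set d := Real.sqrt (∑ i, (X i - Y i) ^ 2) with hd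
      have hdpos : 0 < d := Real.sqrt_pos.mpr hpos
      have hd2 : d ^ 2 = ∑ i, (X i - Y i) ^ 2 := Real.sq_sqrt hpos.le
      have hcast : phi n (fun i => (X i : ℂ)) (fun i => (Y i : ℂ)) = (d : ℂ) ^ 2 := by
        rw [phi]
        push_cast
        exact_mod_cast hd2.symm
      rw [hf d hdpos X Y hcast, hcast]
  -- g preserves B
  have hBg : ∀ X Y : Fin n → ℝ,
      B (f X - f 0) (f Y - f 0) = B (fun i => (X i : ℂ)) (fun i => (Y i : ℂ)) := by
    intro X Y
    have h0 : (fun i => (((0 : Fin n → ℝ)) i : ℂ)) = (0 : Fin n → ℂ) := by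
      funext i; simp
    have h1 := pol (f X) (f Y) (f 0)
    have h2 := pol (fun i => (X i : ℂ)) (fun i => (Y i : ℂ)) 0
    rw [hpres X 0, hpres Y 0, hpres X Y, h0] at h1
    rw [sub_zero, sub_zero] at h2
    have := h1.trans h2.symm
    exact mul_right_cancel₀ two_ne_zero this
  -- standard basis
  set e : Fin n → Fin n → ℝ := fun j i => if i = j then 1 else 0 with he
  set M : Matrix (Fin n) (Fin n) ℂ := Matrix.of fun i j => (f (e j) - f 0) i with hM
  have hMtM : Mᵀ * M = 1 := by
    ext j k
    have := hBg (e j) (e k)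
    simp only [hBdef] at this
    simp only [Matrix.mul_apply, Matrix.transpose_apply, hM, Matrix.of_apply,
      Matrix.one_apply]
    rw [this]
    simp only [he, apply_ite Complex.ofReal, Complex.ofReal_one, Complex.ofReal_zero,
      ite_mul, one_mul, zero_mul]
    rcases eq_or_ne j k with h | h
    · subst h; simp
    · simp [Finset.sum_ite_eq', h, Ne.symm h]
  have hMMt : M * Mᵀ = 1 := mul_eq_one_comm.mp hMtM
  -- mulVec preserves B
  have hL : ∀ z w : Fin n → ℂ, B (M.mulVec z) (M.mulVec w) = B z w := by
    intro z w
    have : B (M.mulVec z) (M.mulVec w) = dotProduct (M.mulVec z) (M.mulVec w) := rfl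
    rw [this, Matrix.dotProduct_mulVec, ← Matrix.mulVec_transpose, Matrix.mulVec_mulVec,
      hMtM, Matrix.one_mulVec]
    rfl
  -- v k = M.mulVec (cast of e k)
  have hv : ∀ k : Fin n, M.mulVec (fun i => ((e k i : ℝ) : ℂ)) = f (e k) - f 0 := by
    intro k
    funext i
    simp [Matrix.mulVec, dotProduct, hM, he, apply_ite Complex.ofReal,
      Finset.sum_ite_eq']
  -- the key extension fact
  have hBsub : ∀ u u' v : Fin n → ℂ, B (u - u') v = B u v - B u' v := by
    intro u u' v
    simp [hBdef, sub_mul, Finset.sum_sub_distrib]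
  have hphiB : ∀ a b : Fin n → ℂ, phi n a b = B (a - b) (a - b) := by
    intro a b
    simp [phi, hBdef, sq]
  have hext : ∀ X : Fin n → ℝ, M.mulVec (fun i => (X i : ℂ)) = f X - f 0 := by
    intro X
    set w : Fin n → ℂ := f X - f 0 - M.mulVec (fun i => (X i : ℂ)) with hw
    have hwk : ∀ k, B w (M.mulVec (fun i => ((e k i : ℝ) : ℂ))) = 0 := by
      intro k
      have h1 : B (f X - f 0) (M.mulVec (fun i => ((e k i : ℝ) : ℂ))) =
          B (fun i => (X i : ℂ)) (fun i => ((e k i : ℝ) : ℂ)) := by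
        rw [hv k]; exact hBg X (e k)
      have h2 : B (M.mulVec (fun i => (X i : ℂ))) (M.mulVec (fun i => ((e k i : ℝ) : ℂ))) =
          B (fun i => (X i : ℂ)) (fun i => ((e k i : ℝ) : ℂ)) := hL _ _
      rw [hw, hBsub, h1, h2, sub_self]
    have hMw : Mᵀ.mulVec w = 0 := by
      funext k
      have h := hwk k
      rw [hv k] at h
      simp only [hBdef] at h
      simpa [Matrix.mulVec, dotProduct, hM, mul_comm] using h
    have hw0 : w = 0 := by
      have h := Matrix.mulVec_mulVec w M Mᵀ
      rw [hMMt, Matrix.one_mulVec, hMw, Matrix.mulVec_zero] at h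
      exact h.symm
    have := sub_eq_zero.mp hw0
    exact this.symm
  -- the affine map
  refine ⟨{ toFun := fun z => M.mulVec z + f 0,
            linear := M.mulVecLin,
            map_vadd' := ?_ }, ?_, ?_⟩
  · intro p v
    simp only [Matrix.mulVecLin_apply, vadd_eq_add, Matrix.mulVec_add]
    abel
  · intro P Q
    show phi n (M.mulVec P + f 0) (M.mulVec Q + f 0) = phi n P Q
    rw [hphiB, hphiB P Q]
    have key : (M.mulVec P + f 0) - (M.mulVec Q + f 0) = M.mulVec (P - Q) := by
      rw [Matrix.mulVec_sub]; abel
    rw [key, hL]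
  · intro X
    show M.mulVec (fun i => (X i : ℂ)) + f 0 = f X
    rw [hext X]
    abel
end

section
/- The map g : ℂ → ℂ defined by g(z) = z + Im(z) preserves all positive distances (i.e., for every real d > 0 and all x, y ∈ ℂ, φ_1(x,y) = d² implies φ_1(g(x), g(y)) = d²), yet there do not exist an affine map I : ℂ → ℂ with orthogonal linear part and ρ ∈ {id_ℂ, τ} such that g = I ∘ ρ. -/
/-- The map ℂ ∋ z ↦ z + Im(z) ∈ ℂ. -/
noncomputable def g : ℂ → ℂ := fun z => z + (z.im : ℂ)

/-- The map g(z) = z + Im(z) preserves all positive distances, yet it is not of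
the form I ∘ ρ with I : ℂ → ℂ affine with orthogonal linear part and
ρ ∈ {id, complex conjugation}. -/
theorem stmt_16 :
    (∀ d : ℝ, 0 < d → ∀ x y : ℂ,
      (x - y) ^ 2 = (d : ℂ) ^ 2 → (g x - g y) ^ 2 = (d : ℂ) ^ 2) ∧
    ¬ ∃ (I : ℂ →ᵃ[ℂ] ℂ) (ρ : ℂ → ℂ),
        (∀ x y : ℂ, (I x - I y) ^ 2 = (x - y) ^ 2) ∧
        (ρ = id ∨ ρ = fun z => (starRingEnd ℂ) z) ∧
        (∀ x : ℂ, g x = I (ρ x)) := by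
  constructor
  · intro d hd x y h
    have h' : x - y = (d : ℂ) ∨ x - y = -(d : ℂ) := sq_eq_sq_iff_eq_or_eq_neg.mp h
    have him : (x - y).im = 0 := by
      rcases h' with h' | h' <;> rw [h'] <;> simp
    have hg : g x - g y = x - y := by
      simp only [g]
      have : (x.im : ℂ) - (y.im : ℂ) = ((x - y).im : ℂ) := by
        push_cast [Complex.sub_im]; ring
      rw [show x + (x.im : ℂ) - (y + (y.im : ℂ)) = (x - y) + ((x.im : ℂ) - (y.im : ℂ)) by ring,
        this, him]
      simp
    rw [hg, h]
  · rintro ⟨I, ρ, hI, hρ, hg⟩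
    have hρ0 : ρ 0 = 0 := by rcases hρ with h | h <;> simp [h]
    have h0 : I 0 = 0 := by
      have := hg 0
      simp [g, hρ0] at this
      exact this.symm
    have hρI : (ρ Complex.I) ^ 2 = -1 := by
      rcases hρ with h | h <;> simp [h, Complex.I_sq]
    have key := hI (ρ Complex.I) 0
    rw [h0, sub_zero, sub_zero, ← hg Complex.I, hρI] at key
    have : g Complex.I = Complex.I + 1 := by simp [g]
    rw [this] at key
    have : (Complex.I + 1) ^ 2 = 2 * Complex.I := by ring_nf; rw [Complex.I_sq]; ring
    rw [this] at key
    have : Complex.I = -1/2 := by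
      field_simp at key ⊢
      linear_combination key
    simpa using congrArg Complex.im this
end
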